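/- arXiv:1002.1604 — 8 statements merged into one kernel-verified Lean document; each statement's English description precedes it below -/
import Mathlib

section
/- For every real number a with |a| < 1 and every natural number n, (1/(2π)) ∫₀^{2π} cos(nω)/(1 − 2a·cos ω + a²) dω = aⁿ/(1 − a²). -/
/-!
On the unit circle the Poisson kernel of the point `a` of the unit disc is
`(1 - a²) / (1 - 2a cos ω + a²)`. The Poisson integral formula for the holomorphic function
`z ↦ zⁿ` says that the average of this kernel against `e^{inω}` is `aⁿ`; taking real parts
gives the claim.
-/

open Real intervalIntegral

open Complex in
lemma norm_circleMap_zero_one_sub_ofReal_sq (a θ : ℝ) :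
    ‖circleMap 0 1 θ - a‖ ^ 2 = 1 - 2 * a * Real.cos θ + a ^ 2 := by
  rw [← normSq_eq_norm_sq, normSq_apply]
  simp only [sub_re, sub_im, circleMap_zero_re, circleMap_zero_im, ofReal_re, ofReal_im]
  linear_combination Real.sin_sq_add_cos_sq θ

lemma poissonKernel_zero_ofReal_circleMap (a θ : ℝ) :
    poissonKernel 0 a (circleMap 0 1 θ) = (1 - a ^ 2) / (1 - 2 * a * Real.cos θ + a ^ 2) := by
  simp [poissonKernel, norm_circleMap_zero_one_sub_ofReal_sq]

lemma inv_two_pi_mul_integral_poissonKernel_mul_cos {w : ℂ} (hw : ‖w‖ < 1) (n : ℕ) :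
    (2 * π)⁻¹ * ∫ θ in (0:ℝ)..(2 * π),
        poissonKernel 0 w (circleMap 0 1 θ) * Real.cos (n * θ) = (w ^ n).re := by
  have hw' : w ∈ Metric.ball 0 1 := mem_ball_zero_iff.mpr hw
  have hPoisson := (differentiable_pow n).diffContOnCl.circleAverage_poissonKernel_smul hw'
  have hint : CircleIntegrable (poissonKernel 0 w • fun z : ℂ ↦ z ^ n) 0 1 := by
    refine ContinuousOn.circleIntegrable zero_le_one (ContinuousOn.smul ?_ (by fun_prop))
    rw [poissonKernel_eq_re_herglotzRieszKernel]
    simpa using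
      Complex.continuous_re.comp_continuousOn (continuousOn_herglotzRieszKernel_sphere hw')
  rw [← hPoisson, ← Complex.reCLM_apply, ← Complex.reCLM.circleAverage_comp_comm hint,
    circleAverage_def]
  simp [circleMap_zero_pow, circleMap_zero_re]

theorem stmt_0 (a : ℝ) (ha : |a| < 1) (n : ℕ) :
    (1 / (2 * π)) * ∫ ω in (0:ℝ)..(2 * π),
      Real.cos (n * ω) / (1 - 2 * a * Real.cos ω + a ^ 2)
    = a ^ n / (1 - a ^ 2) := by
  have ha2 : 1 - a ^ 2 ≠ 0 := by nlinarith [abs_lt.mp ha]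
  have hP := inv_two_pi_mul_integral_poissonKernel_mul_cos (w := a) (by simpa using ha) n
  simp only [poissonKernel_zero_ofReal_circleMap, ← Complex.ofReal_pow, Complex.ofReal_re] at hP
  have hI : ∫ ω in (0:ℝ)..(2 * π), Real.cos (n * ω) / (1 - 2 * a * Real.cos ω + a ^ 2)
      = (1 - a ^ 2)⁻¹ * ∫ ω in (0:ℝ)..(2 * π),
          (1 - a ^ 2) / (1 - 2 * a * Real.cos ω + a ^ 2) * Real.cos (n * ω) := by
    rw [← integral_const_mul]
    congr 1 with ω
    field_simp
  rw [hI, ← hP]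
  ring
end

section
/- For every natural number t and every integer j, (1/(4π²)) ∫₀^{2π}∫₀^{2π} cos(jφ)·cos(tω)·(1 − cos 2φ) / (1 − 2 cos ω · cos φ + cos²φ) dω dφ = (1/π) ∫₀^{2π} cos(jφ)·(cos φ)^t dφ. -/
/-!
Since `1 - cos 2φ = 2 (1 - cos² φ)`, the inner integrand is `2 cos (jφ)` times `cos (tω)` times the
Poisson kernel `(1 - r²) / (1 - 2 r cos ω + r²)` at `r = cos φ`. For `|r| < 1` the Poisson integral
formula applied to `z ↦ z ^ t` on the unit disc shows that the `t`-th cosine coefficient of this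
kernel is `2π rᵗ`, so the inner integral equals `4π cos (jφ) cosᵗ φ` for all `φ ∉ πℤ`, i.e. almost
everywhere.
-/

open Real MeasureTheory

lemma one_sub_two_mul_cos_mul_add_sq_pos {r : ℝ} (hr : |r| < 1) (θ : ℝ) :
    0 < 1 - 2 * Real.cos θ * r + r ^ 2 := by
  have hcr : Real.cos θ * r ≤ |r| :=
    calc Real.cos θ * r ≤ |Real.cos θ * r| := le_abs_self _
      _ = |Real.cos θ| * |r| := abs_mul _ _
      _ ≤ |r| := mul_le_of_le_one_left (abs_nonneg r) (abs_cos_le_one θ)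
  nlinarith [sq_abs r, mul_pos (sub_pos.2 hr) (sub_pos.2 hr)]

lemma poissonKernel_circleMap_zero_one (r θ : ℝ) :
    poissonKernel 0 r (circleMap 0 1 θ) = (1 - r ^ 2) / (1 - 2 * Real.cos θ * r + r ^ 2) := by
  have hnorm : ‖circleMap 0 1 θ - r‖ ^ 2 = 1 - 2 * Real.cos θ * r + r ^ 2 := by
    rw [← Complex.normSq_eq_norm_sq, Complex.normSq_apply]
    simp only [Complex.sub_re, Complex.sub_im, circleMap_zero_re, circleMap_zero_im,
      Complex.ofReal_re, Complex.ofReal_im]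
    linear_combination Real.sin_sq_add_cos_sq θ
  simp [poissonKernel, hnorm]

theorem integral_cos_nat_mul_mul_poissonKernel {r : ℝ} (hr : |r| < 1) (t : ℕ) :
    ∫ θ in (0:ℝ)..2 * π, Real.cos (t * θ) * ((1 - r ^ 2) / (1 - 2 * Real.cos θ * r + r ^ 2))
      = 2 * π * r ^ t := by
  have hpow : DiffContOnCl ℂ (fun z : ℂ ↦ z ^ t) (Metric.ball 0 1) :=
    (differentiable_pow t).diffContOnCl
  have hr' : (r : ℂ) ∈ Metric.ball (0 : ℂ) 1 := by simpa using hr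
  have h := congrArg Complex.re (hpow.circleAverage_poissonKernel_smul hr')
  rw [circleAverage_def, Complex.smul_re, ← RCLike.re_eq_complex_re,
    ← intervalIntegral.intervalIntegral_re] at h
  · simp only [Pi.smul_apply', poissonKernel_circleMap_zero_one, circleMap_zero_pow,
      RCLike.re_eq_complex_re, Complex.smul_re, circleMap_zero_re, one_pow, one_mul, smul_eq_mul,
      ← Complex.ofReal_pow, Complex.ofReal_re] at h
    rw [← h]
    simp_rw [mul_comm (Real.cos _)]
    field_simp
  · have hD θ := (one_sub_two_mul_cos_mul_add_sq_pos hr θ).ne'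
    simp only [Pi.smul_apply', poissonKernel_circleMap_zero_one]
    exact Continuous.intervalIntegrable (by fun_prop (disch := exact hD _)) _ _

lemma integral_const_mul_cos_mul_one_sub_cos_two_mul_div {φ : ℝ} (hφ : Real.sin φ ≠ 0)
    (a : ℝ) (t : ℕ) :
    ∫ ω in (0:ℝ)..(2 * π), a * Real.cos (t * ω) * (1 - Real.cos (2 * φ)) /
        (1 - 2 * Real.cos ω * Real.cos φ + Real.cos φ ^ 2)
      = 4 * π * (a * Real.cos φ ^ t) := by
  have hr : |Real.cos φ| < 1 := by
    rw [← sq_lt_one_iff_abs_lt_one]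
    linarith [Real.sin_sq_add_cos_sq φ, sq_pos_of_ne_zero hφ]
  have hintegrand (ω : ℝ) : a * Real.cos (t * ω) * (1 - Real.cos (2 * φ)) /
        (1 - 2 * Real.cos ω * Real.cos φ + Real.cos φ ^ 2)
      = 2 * a * (Real.cos (t * ω) * ((1 - Real.cos φ ^ 2) /
          (1 - 2 * Real.cos ω * Real.cos φ + Real.cos φ ^ 2))) := by
    rw [Real.cos_two_mul]; ring
  simp only [hintegrand]
  rw [intervalIntegral.integral_const_mul, integral_cos_nat_mul_mul_poissonKernel hr]
  ring

lemma ae_sin_ne_zero : ∀ᵐ φ : ℝ, Real.sin φ ≠ 0 := by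
  have hnull : volume (Set.range fun n : ℤ ↦ (n : ℝ) * π) = 0 :=
    (Set.countable_range _).measure_zero _
  filter_upwards [measure_eq_zero_iff_ae_notMem.mp hnull] with φ hφ hsin
  exact hφ (Real.sin_eq_zero_iff.mp hsin)

theorem stmt_3 (t : ℕ) (j : ℤ) :
    (1 / (4 * π ^ 2)) * ∫ φ in (0:ℝ)..(2 * π), ∫ ω in (0:ℝ)..(2 * π),
        Real.cos (j * φ) * Real.cos (t * ω) * (1 - Real.cos (2 * φ)) /
          (1 - 2 * Real.cos ω * Real.cos φ + (Real.cos φ) ^ 2)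
    = (1 / π) * ∫ φ in (0:ℝ)..(2 * π), Real.cos (j * φ) * (Real.cos φ) ^ t := by
  rw [intervalIntegral.integral_congr_ae (ae_sin_ne_zero.mono fun φ hφ _ ↦
      integral_const_mul_cos_mul_one_sub_cos_two_mul_div hφ (Real.cos (j * φ)) t),
    intervalIntegral.integral_const_mul]
  field_simp
end

section
/- For every natural number t ≥ 2 and every integer j, (1/π²) ∫₀^{2π}∫₀^{2π} ( cos(tω) − cos((t−2)ω) ) · sin(jφ) · sin φ / (1 − 2 cos ω · cos φ + cos²φ) dω dφ = (1/π) ∫₀^{2π} (cos φ)^{t−2} · ( cos((j+1)φ) − cos((j−1)φ) ) dφ. -/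
/-!
For `|a| < 1`, Poisson's integral formula for the holomorphic function `zⁿ` on the unit disc, at
the point `a`, gives `∫₀^{2π} cos (n ω) / (1 - 2 a cos ω + a²) dω = 2π aⁿ / (1 - a²)`. Taking the
difference for `n = m + 2` and `n = m` cancels the factor `1 - a²`, so with `a = cos φ` the inner
integral is `-2π cos^m φ · sin (j φ) sin φ` (when `sin φ = 0` both sides vanish). The outer
integrands then agree by `cos ((j + 1) φ) - cos ((j - 1) φ) = -2 sin (j φ) sin φ`.
-/

open Real

lemma one_sub_two_mul_cos_mul_add_sq_pos_s5 {a : ℝ} (ha : |a| < 1) (ω : ℝ) :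
    0 < 1 - 2 * cos ω * a + a ^ 2 := by
  have h : cos ω * a ≤ |a| := (le_abs_self _).trans <| by
    rw [abs_mul]; exact mul_le_of_le_one_left (abs_nonneg a) (abs_cos_le_one ω)
  nlinarith [sq_abs a]

lemma norm_exp_mul_I_sub_ofReal_sq (a θ : ℝ) :
    ‖Complex.exp (θ * Complex.I) - a‖ ^ 2 = 1 - 2 * cos θ * a + a ^ 2 := by
  rw [Complex.sq_norm, Complex.normSq_apply]
  simp only [Complex.sub_re, Complex.sub_im, Complex.exp_ofReal_mul_I_re,
    Complex.exp_ofReal_mul_I_im, Complex.ofReal_re, Complex.ofReal_im]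
  linear_combination sin_sq_add_cos_sq θ

lemma integral_cos_nat_mul_div {a : ℝ} (ha : |a| < 1) (n : ℕ) :
    ∫ ω in (0:ℝ)..(2 * π), cos (n * ω) / (1 - 2 * cos ω * a + a ^ 2)
      = 2 * π * a ^ n / (1 - a ^ 2) := by
  have h := congrArg Complex.re <|
    (Differentiable.diffContOnCl (f := fun z : ℂ => z ^ n) (by fun_prop)
      (s := Metric.ball 0 1)).circleAverage_poissonKernel_smul' (w := (a : ℂ)) (by simpa using ha)
  have hint : CircleIntegrable (fun z : ℂ =>
      ((‖z - 0‖ ^ 2 - ‖(a : ℂ) - 0‖ ^ 2) / ‖z - 0 - ((a : ℂ) - 0)‖ ^ 2) • z ^ n) 0 1 := by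
    have hne : ∀ z ∈ Metric.sphere (0 : ℂ) |1|, ‖z - 0 - ((a : ℂ) - 0)‖ ^ 2 ≠ 0 := by
      intro z hz
      simp only [sub_zero, ne_eq, pow_eq_zero_iff two_ne_zero, norm_eq_zero, sub_eq_zero]
      rintro rfl
      simp [abs_of_pos one_pos] at hz
      linarith
    exact ContinuousOn.circleIntegrable' (by fun_prop (disch := assumption))
  rw [← Complex.reCLM_apply, ← Complex.reCLM.circleAverage_comp_comm hint,
    circleAverage_def] at h
  simp only [Function.comp_apply, Complex.reCLM_apply, circleMap_zero, Complex.ofReal_one,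
    one_mul, sub_zero, Complex.smul_re, Complex.norm_exp_ofReal_mul_I, Complex.norm_real,
    norm_eq_abs, sq_abs, norm_exp_mul_I_sub_ofReal_sq, ← Complex.ofReal_pow, Complex.ofReal_re] at h
  have hpow (θ : ℝ) : (Complex.exp (θ * Complex.I) ^ n).re = cos (n * θ) := by
    rw [← Complex.exp_nat_mul, show (n : ℂ) * (θ * Complex.I) = ((n * θ : ℝ) : ℂ) * Complex.I by
      push_cast; ring, Complex.exp_ofReal_mul_I_re]
  have hfactor (θ : ℝ) : (1 ^ 2 - a ^ 2) / (1 - 2 * cos θ * a + a ^ 2) * cos (n * θ)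
      = (1 - a ^ 2) * (cos (n * θ) / (1 - 2 * cos θ * a + a ^ 2)) := by ring
  simp only [hpow, smul_eq_mul, hfactor, intervalIntegral.integral_const_mul] at h
  have ha2 : 1 - a ^ 2 ≠ 0 := by nlinarith [sq_abs a, abs_nonneg a]
  field_simp at h ⊢
  linear_combination h

lemma integral_cos_add_two_sub_cos_div {a : ℝ} (ha : |a| < 1) (m : ℕ) :
    ∫ ω in (0:ℝ)..(2 * π), (cos ((m + 2 : ℕ) * ω) - cos (m * ω)) / (1 - 2 * cos ω * a + a ^ 2)
      = -(2 * π) * a ^ m := by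
  have hint (n : ℕ) : IntervalIntegrable (fun ω => cos (n * ω) / (1 - 2 * cos ω * a + a ^ 2))
      MeasureTheory.volume 0 (2 * π) :=
    (Continuous.div (by fun_prop) (by fun_prop)
      fun ω => (one_sub_two_mul_cos_mul_add_sq_pos_s5 ha ω).ne').intervalIntegrable _ _
  have ha2 : 1 - a ^ 2 ≠ 0 := by nlinarith [sq_abs a, abs_nonneg a]
  simp only [sub_div]
  rw [intervalIntegral.integral_sub (hint _) (hint _), integral_cos_nat_mul_div ha,
    integral_cos_nat_mul_div ha]
  field_simp
  ring

lemma integral_cos_add_two_sub_cos_mul_sin_div (m : ℕ) (c φ : ℝ) :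
    ∫ ω in (0:ℝ)..(2 * π), (cos ((m + 2 : ℕ) * ω) - cos (m * ω)) * c * sin φ /
        (1 - 2 * cos ω * cos φ + cos φ ^ 2)
      = -(2 * π) * (cos φ ^ m * c * sin φ) := by
  rcases eq_or_ne (sin φ) 0 with hsin | hsin
  · simp [hsin]
  have hcos : |cos φ| < 1 := by
    rw [← sq_lt_one_iff_abs_lt_one]
    nlinarith [sin_sq_add_cos_sq φ, sq_pos_of_ne_zero hsin]
  have hfactor (ω : ℝ) : (cos ((m + 2 : ℕ) * ω) - cos (m * ω)) * c * sin φ /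
      (1 - 2 * cos ω * cos φ + cos φ ^ 2) = c * sin φ *
      ((cos ((m + 2 : ℕ) * ω) - cos (m * ω)) / (1 - 2 * cos ω * cos φ + cos φ ^ 2)) := by ring
  simp only [hfactor, intervalIntegral.integral_const_mul, integral_cos_add_two_sub_cos_div hcos]
  ring

theorem stmt_5 (t : ℕ) (ht : 2 ≤ t) (j : ℤ) :
    (1 / π ^ 2) * ∫ φ in (0:ℝ)..(2 * π), ∫ ω in (0:ℝ)..(2 * π),
        (Real.cos (t * ω) - Real.cos ((t - 2 : ℕ) * ω)) * Real.sin (j * φ) * Real.sin φ /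
          (1 - 2 * Real.cos ω * Real.cos φ + (Real.cos φ) ^ 2)
    = (1 / π) * ∫ φ in (0:ℝ)..(2 * π),
        (Real.cos φ) ^ (t - 2) * (Real.cos ((j + 1) * φ) - Real.cos ((j - 1) * φ)) := by
  obtain ⟨m, rfl⟩ := Nat.exists_eq_add_of_le' ht
  have hdiff (φ : ℝ) : cos φ ^ m * (cos ((j + 1) * φ) - cos ((j - 1) * φ))
      = -2 * (cos φ ^ m * sin (j * φ) * sin φ) := by
    rw [cos_sub_cos]
    ring_nf
  simp only [Nat.add_sub_cancel, integral_cos_add_two_sub_cos_mul_sin_div, hdiff,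
    intervalIntegral.integral_const_mul]
  field_simp
end

section
/- There exists a constant C > 0 such that for every real ω ∈ (0, π/2] and every natural number j ≥ 1, | ∫_{−π}^{π} e^{ijφ} / (1 − e^{iω}·cos φ) dφ − √2·π·e^{iπ/4}·ω^{−1/2}·exp(−√2·e^{−iπ/4}·ω^{1/2}·j) | ≤ C·( j^{−1} + ω^{1/2} ). -/
/-!
Put `z = e^{iω}` and let `ρ` be the root of `z ρ² - 2ρ + z = 0` in the unit disc, so that
`(1 + ρ²) (1 - z cos φ) = (1 - ρ e^{iφ}) (1 - ρ e^{-iφ})`. Expanding both factors in geometric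
series evaluates the integral exactly as `2π ρ^j / s`, where `s = (1 - ρ²) / (1 + ρ²)` is the
square root of `1 - z²` with positive real part.

The main term is `2π e^{-σ j} / σ` with `σ = √2 e^{-iπ/4} √ω = (1 - i) √ω`, a square root of
`-2iω`. For small `ω`, `s² - σ² = O(ω²)` gives `s - σ = O(ω^{3/2})`, and a third-order Taylor
expansion gives `ρ e^σ - 1 = O(ω^{3/2})`. Hence `|ρ^j - e^{-σ j}| = O(j ω^{3/2} e^{-j √ω / 2})`,
and `x e^{-x/2} ≤ 1` at `x = j √ω` makes the error `O(√ω)` uniformly in `j`. For `ω` bounded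
below, both terms are `O(1 / √ω) = O(√ω)`.
-/

open Real Complex

theorem norm_exp_I_mul_int_mul (N : ℤ) (φ : ℝ) : ‖cexp (I * N * φ)‖ = 1 := by
  simpa [mul_assoc] using norm_exp_I_mul_ofReal (N * φ)

theorem integral_exp_I_mul_int_mul (N : ℤ) :
    ∫ φ in -π..π, cexp (I * N * φ) = if N = 0 then (2 * π : ℂ) else 0 := by
  split_ifs with hN
  · simp [hN]; ring
  have hc : I * N ≠ 0 := by simp [hN]
  have hperiod : cexp (I * N * π) = cexp (I * N * (-π : ℝ)) := by
    have h : I * N * π = I * N * (-π : ℝ) + N * (2 * π * I) := by push_cast; ring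
    rw [h, Complex.exp_add, exp_int_mul_two_pi_mul_I, mul_one]
  rw [integral_exp_mul_complex hc, hperiod, sub_self, zero_div]

theorem one_sub_mul_exp_ne_zero {ρ : ℂ} (hρ : ‖ρ‖ < 1) (m : ℤ) (φ : ℝ) :
    1 - ρ * cexp (I * m * φ) ≠ 0 := fun h ↦ by
  have := congrArg norm (sub_eq_zero.mp h)
  rw [norm_one, norm_mul, norm_exp_I_mul_int_mul, mul_one] at this
  linarith

theorem hasSum_integral_exp_div_one_sub_mul_exp {ρ : ℂ} (hρ : ‖ρ‖ < 1) (n m : ℤ) :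
    HasSum (fun k : ℕ ↦ ρ ^ k * ∫ φ in -π..π, cexp (I * (n + m * k : ℤ) * φ))
      (∫ φ in -π..π, cexp (I * n * φ) / (1 - ρ * cexp (I * m * φ))) := by
  have hterm (k : ℕ) (φ : ℝ) : cexp (I * n * φ) * (ρ * cexp (I * m * φ)) ^ k
      = ρ ^ k * cexp (I * (n + m * k : ℤ) * φ) := by
    rw [mul_pow, ← Complex.exp_nat_mul, mul_left_comm, ← Complex.exp_add]
    push_cast
    ring_nf
  simp_rw [← intervalIntegral.integral_const_mul, ← hterm]
  refine intervalIntegral.hasSum_integral_of_dominated_convergence (fun k _ ↦ ‖ρ‖ ^ k)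
    (fun k ↦ by fun_prop) (fun k ↦ ?_) (.of_forall fun _ _ ↦ summable_geometric_of_lt_one
      (norm_nonneg _) hρ) intervalIntegrable_const (.of_forall fun φ _ ↦ ?_)
  · refine .of_forall fun φ _ ↦ le_of_eq ?_
    rw [norm_mul, norm_pow, norm_mul, norm_exp_I_mul_int_mul, norm_exp_I_mul_int_mul, one_mul,
      mul_one]
  · have hlt : ‖ρ * cexp (I * m * φ)‖ < 1 := by rwa [norm_mul, norm_exp_I_mul_int_mul, mul_one]
    simpa [div_eq_mul_inv] using
      (hasSum_geometric_of_norm_lt_one hlt).mul_left (cexp (I * n * φ))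

theorem integral_exp_div_one_sub_mul_exp_I {ρ : ℂ} (hρ : ‖ρ‖ < 1) (n : ℕ) :
    ∫ φ in -π..π, cexp (I * (n : ℤ) * φ) / (1 - ρ * cexp (I * (1 : ℤ) * φ))
      = ∫ φ in -π..π, cexp (I * (n : ℤ) * φ) := by
  refine (hasSum_integral_exp_div_one_sub_mul_exp hρ n 1).unique ?_
  convert hasSum_single 0 fun k hk ↦ ?_
  · simp
  · rw [integral_exp_I_mul_int_mul, if_neg (by omega), mul_zero]

theorem integral_exp_div_one_sub_mul_exp_neg_I {ρ : ℂ} (hρ : ‖ρ‖ < 1) (n : ℕ) :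
    ∫ φ in -π..π, cexp (I * (n : ℤ) * φ) / (1 - ρ * cexp (I * (-1 : ℤ) * φ)) = 2 * π * ρ ^ n := by
  refine (hasSum_integral_exp_div_one_sub_mul_exp hρ n (-1)).unique ?_
  have h := hasSum_single
    (f := fun k : ℕ ↦ ρ ^ k * ∫ φ in -π..π, cexp (I * (n + -1 * k : ℤ) * φ)) n fun k hk ↦ by
      rw [integral_exp_I_mul_int_mul, if_neg (by omega), mul_zero]
  rwa [integral_exp_I_mul_int_mul, if_pos (by ring), mul_comm] at h

theorem div_one_sub_mul_half_add_eq {ρ z a b : ℂ} (e : ℂ) (hz : z * (1 + ρ ^ 2) = 2 * ρ)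
    (hab : a * b = 1) (ha : 1 - ρ * a ≠ 0) (hb : 1 - ρ * b ≠ 0) (hsub : 1 - ρ ^ 2 ≠ 0)
    (hadd : 1 + ρ ^ 2 ≠ 0) :
    e / (1 - z * ((a + b) / 2))
      = (1 + ρ ^ 2) / (1 - ρ ^ 2) * (e / (1 - ρ * a) + e / (1 - ρ * b) - e) := by
  have hden : 1 - z * ((a + b) / 2) = (1 - ρ * a) * (1 - ρ * b) / (1 + ρ ^ 2) := by
    rw [eq_div_iff hadd]
    linear_combination (-(a + b) / 2) * hz - ρ ^ 2 * hab
  rw [hden]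
  field_simp
  linear_combination e * ρ ^ 2 * hab

theorem integral_exp_mul_div_one_sub_mul_cos {ρ z : ℂ} (hρ : ‖ρ‖ < 1)
    (hz : z * (1 + ρ ^ 2) = 2 * ρ) (j : ℕ) :
    ∫ φ in -π..π, cexp (I * j * φ) / (1 - z * (Real.cos φ : ℂ))
      = 2 * π * ρ ^ j * (1 + ρ ^ 2) / (1 - ρ ^ 2) := by
  have hρ2 : ‖ρ ^ 2‖ < 1 := by rw [norm_pow]; nlinarith [norm_nonneg ρ]
  have hsub : 1 - ρ ^ 2 ≠ 0 := fun h ↦ by simp [← sub_eq_zero.1 h] at hρ2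
  have hadd : 1 + ρ ^ 2 ≠ 0 := fun h ↦ by simp [eq_neg_of_add_eq_zero_right h] at hρ2
  set e : ℝ → ℂ := fun φ ↦ cexp (I * (j : ℤ) * φ)
  set geom : ℤ → ℝ → ℂ := fun m φ ↦ e φ / (1 - ρ * cexp (I * m * φ))
  have hsplit (φ : ℝ) : cexp (I * j * φ) / (1 - z * (Real.cos φ : ℂ))
      = (1 + ρ ^ 2) / (1 - ρ ^ 2) * (geom 1 φ + geom (-1) φ - e φ) := by
    have hab : cexp (I * (1 : ℤ) * φ) * cexp (I * (-1 : ℤ) * φ) = 1 := by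
      rw [← Complex.exp_add]; push_cast; ring_nf; exact Complex.exp_zero
    have hcos : (Real.cos φ : ℂ) = (cexp (I * (1 : ℤ) * φ) + cexp (I * (-1 : ℤ) * φ)) / 2 := by
      rw [Complex.ofReal_cos, Complex.cos]; push_cast; ring_nf
    rw [hcos, div_one_sub_mul_half_add_eq _ hz hab (one_sub_mul_exp_ne_zero hρ 1 φ)
      (one_sub_mul_exp_ne_zero hρ (-1) φ) hsub hadd]
    simp [e, geom]
  have hcont (m : ℤ) : Continuous (geom m) :=
    (by fun_prop : Continuous e).div (by fun_prop) (one_sub_mul_exp_ne_zero hρ m)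
  simp_rw [hsplit]
  rw [intervalIntegral.integral_const_mul, intervalIntegral.integral_sub,
    intervalIntegral.integral_add, integral_exp_div_one_sub_mul_exp_I hρ,
    integral_exp_div_one_sub_mul_exp_neg_I hρ]
  · ring
  all_goals exact Continuous.intervalIntegrable (by fun_prop) _ _

theorem norm_one_sub_lt_one_of_re_pos {s : ℂ} (hs : 0 < s.re) (h : ‖1 - s ^ 2‖ ≤ 1) :
    ‖1 - s‖ < 1 := by
  have hlt : ‖1 - s‖ < ‖1 + s‖ := by
    rw [← sq_lt_sq₀ (norm_nonneg _) (norm_nonneg _), Complex.sq_norm, Complex.sq_norm,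
      Complex.normSq_apply, Complex.normSq_apply]
    simp only [sub_re, add_re, sub_im, add_im, one_re, one_im]
    nlinarith
  have hprod : ‖1 - s‖ * ‖1 + s‖ ≤ 1 := by
    rw [← norm_mul]; convert h using 2; ring
  nlinarith [norm_nonneg (1 - s)]

theorem norm_sub_mul_re_add_le (a b : ℂ) : ‖a - b‖ * (a + b).re ≤ ‖a ^ 2 - b ^ 2‖ := by
  rw [show a ^ 2 - b ^ 2 = (a - b) * (a + b) by ring, norm_mul]
  exact mul_le_mul_of_nonneg_left (re_le_norm _) (norm_nonneg _)

theorem norm_one_sub_mul_exp_sub_le {x : ℂ} (hx : ‖x‖ ≤ 1) :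
    ‖(1 - x) * cexp x - (1 - x ^ 2 / 2)‖ ≤ ‖x‖ ^ 3 := by
  have hR := Complex.exp_bound hx (n := 3) (by norm_num)
  simp only [Finset.sum_range_succ, Finset.sum_range_zero, Nat.factorial] at hR
  norm_num at hR
  set R := cexp x - (1 + x + x ^ 2 / 2)
  have hsplit : (1 - x) * cexp x - (1 - x ^ 2 / 2) = (1 - x) * R - x ^ 3 / 2 := by
    simp only [R]; ring
  have h1x : ‖1 - x‖ ≤ 2 := (norm_sub_le _ _).trans (by rw [norm_one]; linarith)
  rw [hsplit]
  calc ‖(1 - x) * R - x ^ 3 / 2‖ ≤ ‖1 - x‖ * ‖R‖ + ‖x‖ ^ 3 / 2 := by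
        refine (norm_sub_le _ _).trans ?_
        rw [norm_mul, norm_div, norm_pow, Complex.norm_two]
    _ ≤ 2 * (‖x‖ ^ 3 * (2 / 9)) + ‖x‖ ^ 3 / 2 := by gcongr
    _ ≤ ‖x‖ ^ 3 := by nlinarith [pow_nonneg (norm_nonneg x) 3]

theorem norm_pow_sub_one_le {R : Type*} [NormedRing R] [NormOneClass R] (a : R) (n : ℕ) :
    ‖a ^ n - 1‖ ≤ n * ‖a - 1‖ * rexp (n * ‖a - 1‖) := by
  set d := ‖a - 1‖
  have ha : ‖a‖ ≤ rexp d := by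
    have := norm_sub_norm_le a 1
    rw [norm_one] at this
    linarith [Real.add_one_le_exp d]
  have hpow (i : ℕ) (hi : i ∈ Finset.range n) : ‖a ^ i‖ ≤ rexp (n * d) := calc
    ‖a ^ i‖ ≤ ‖a‖ ^ i := norm_pow_le a i
    _ ≤ rexp d ^ i := by gcongr
    _ = rexp (i * d) := by rw [← Real.exp_nat_mul]
    _ ≤ rexp (n * d) := by
      have : (i : ℝ) ≤ n := by exact_mod_cast (Finset.mem_range.1 hi).le
      gcongr
  rw [← geom_sum_mul, show n * d * rexp (n * d) = n * rexp (n * d) * d by ring]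
  refine (norm_mul_le _ _).trans (mul_le_mul_of_nonneg_right ?_ (norm_nonneg _))
  refine (norm_sum_le _ _).trans ?_
  simpa using Finset.sum_le_sum hpow

theorem mul_exp_neg_half_le_one (x : ℝ) : x * rexp (-(x / 2)) ≤ 1 := by
  have h := Real.mul_exp_neg_le_exp_neg_one (x / 2)
  have he : rexp (-1) < 1 / 2 := by
    rw [Real.exp_neg, inv_lt_comm₀ (Real.exp_pos 1) (by norm_num)]
    linarith [Real.exp_one_gt_d9]
  linarith

/-- A square root of `1 - e^{2iω}`, since `1 - e^{2iω} = 2 sin ω · e^{i(ω - π/2)}`. -/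
noncomputable def sqrtDiscr (ω : ℝ) : ℂ :=
  (√(2 * Real.sin ω) : ℂ) * cexp (((ω - π / 2) / 2 : ℝ) * I)

/-- The root of `e^{iω} ρ² - 2ρ + e^{iω}` in the unit disc. -/
noncomputable def innerRoot (ω : ℝ) : ℂ := (1 - sqrtDiscr ω) * cexp (-(I * ω))

noncomputable def decayRate (ω : ℝ) : ℂ := (1 - I) * (√ω : ℂ)

theorem sq_sqrtDiscr {ω : ℝ} (h : 0 ≤ Real.sin ω) : sqrtDiscr ω ^ 2 = 1 - cexp (I * ω) ^ 2 := by
  have hrot : cexp (((ω - π / 2) / 2 : ℝ) * I) ^ 2 = -I * cexp (ω * I) := by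
    have harg : (2 : ℕ) * (((ω - π / 2) / 2 : ℝ) * I) = ω * I + -(π / 2 * I) := by push_cast; ring
    rw [← Complex.exp_nat_mul, harg, Complex.exp_add, Complex.exp_neg, exp_pi_div_two_mul_I,
      inv_I]
    ring
  have hinv : cexp (-ω * I) * cexp (ω * I) = 1 := by rw [← Complex.exp_add]; simp
  rw [sqrtDiscr, mul_pow, hrot, ← Complex.ofReal_pow, Real.sq_sqrt (by positivity),
    Complex.ofReal_mul, Complex.ofReal_sin, Complex.sin, mul_comm I (ω : ℂ)]
  push_cast
  linear_combination hinv - (cexp (-ω * I) - cexp (ω * I)) * cexp (ω * I) * I_sq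

theorem norm_sqrtDiscr (ω : ℝ) : ‖sqrtDiscr ω‖ = √(2 * Real.sin ω) := by
  rw [sqrtDiscr, norm_mul, norm_exp_ofReal_mul_I, mul_one, Complex.norm_real, Real.norm_eq_abs,
    abs_of_nonneg (Real.sqrt_nonneg _)]

theorem re_sqrtDiscr_pos {ω : ℝ} (h0 : 0 < ω) (hπ : ω < π) : 0 < (sqrtDiscr ω).re := by
  rw [sqrtDiscr, re_ofReal_mul, exp_ofReal_mul_I_re]
  exact mul_pos (Real.sqrt_pos.2 (by have := Real.sin_pos_of_pos_of_lt_pi h0 hπ; positivity))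
    (Real.cos_pos_of_mem_Ioo ⟨by linarith, by linarith⟩)

theorem sqrt_le_norm_sqrtDiscr {ω : ℝ} (h0 : 0 ≤ ω) (hω : ω ≤ π / 2) : √ω ≤ ‖sqrtDiscr ω‖ := by
  rw [norm_sqrtDiscr]
  refine Real.sqrt_le_sqrt ?_
  have hJordan := Real.mul_le_sin h0 hω
  have hsin := Real.sin_nonneg_of_nonneg_of_le_pi h0 (by linarith [Real.pi_pos])
  rw [div_mul_eq_mul_div, div_le_iff₀ Real.pi_pos] at hJordan
  nlinarith [Real.pi_le_four]

theorem norm_innerRoot_lt_one {ω : ℝ} (h0 : 0 < ω) (hπ : ω < π) : ‖innerRoot ω‖ < 1 := by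
  have hexp : ‖cexp (-(I * ω))‖ = 1 := by simpa using norm_exp_I_mul_ofReal (-ω)
  rw [innerRoot, norm_mul, hexp, mul_one]
  refine norm_one_sub_lt_one_of_re_pos (re_sqrtDiscr_pos h0 hπ) ?_
  rw [sq_sqrtDiscr (Real.sin_pos_of_pos_of_lt_pi h0 hπ).le, sub_sub_cancel, norm_pow,
    norm_exp_I_mul_ofReal, one_pow]

theorem integral_exp_mul_div_one_sub_exp_mul_cos {ω : ℝ} (h0 : 0 < ω) (hπ : ω < π) (j : ℕ) :
    ∫ φ in -π..π, cexp (I * j * φ) / (1 - cexp (I * ω) * (Real.cos φ : ℂ))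
      = 2 * π * innerRoot ω ^ j / sqrtDiscr ω := by
  set z := cexp (I * ω)
  set s := sqrtDiscr ω
  set ρ := innerRoot ω
  have hz0 : z ≠ 0 := Complex.exp_ne_zero _
  have hs0 : s ≠ 0 := fun h ↦ by simpa [s, h] using re_sqrtDiscr_pos h0 hπ
  have hzρ : z * ρ = 1 - s := by
    show z * ((1 - s) * cexp (-(I * ω))) = 1 - s
    rw [mul_left_comm, ← Complex.exp_add, add_neg_cancel, Complex.exp_zero, mul_one]
  have hs : s ^ 2 = 1 - z ^ 2 := sq_sqrtDiscr (Real.sin_pos_of_pos_of_lt_pi h0 hπ).le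
  have hadd : z * (1 + ρ ^ 2) = 2 * ρ :=
    mul_left_cancel₀ hz0 (by linear_combination (z * ρ - 1 - s) * hzρ + hs)
  have hsub : (1 + ρ ^ 2) * s = 1 - ρ ^ 2 :=
    mul_left_cancel₀ (pow_ne_zero 2 hz0)
      (by linear_combination s * z * hadd + (z * ρ + 1 + s) * hzρ - hs)
  have hadd0 : 1 + ρ ^ 2 ≠ 0 := fun h ↦ by
    have hρ0 : ρ = 0 := by simpa [h] using hadd.symm
    simp [hρ0] at h
  rw [integral_exp_mul_div_one_sub_mul_cos (norm_innerRoot_lt_one h0 hπ) hadd, ← hsub,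
    mul_comm _ s, mul_div_mul_right _ _ hadd0]

theorem sqrt_two_mul_exp_I_mul_pi_div_four : (√2 : ℂ) * cexp (I * π / 4) = 1 + I := by
  have h2 : (√2 : ℂ) * √2 = 2 := by norm_cast; exact Real.mul_self_sqrt (by norm_num)
  rw [show I * π / 4 = (π / 4 : ℝ) * I by push_cast; ring, exp_mul_I, ← ofReal_cos, ← ofReal_sin,
    Real.cos_pi_div_four, Real.sin_pi_div_four]
  push_cast
  linear_combination (1 + I) / 2 * h2

theorem sqrt_two_mul_exp_neg_I_mul_pi_div_four : (√2 : ℂ) * cexp (-(I * π / 4)) = 1 - I := by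
  have h2 : (√2 : ℂ) * √2 = 2 := by norm_cast; exact Real.mul_self_sqrt (by norm_num)
  rw [show -(I * π / 4) = (-(π / 4) : ℝ) * I by push_cast; ring, exp_mul_I, ← ofReal_cos,
    ← ofReal_sin, Real.cos_neg, Real.sin_neg, Real.cos_pi_div_four, Real.sin_pi_div_four]
  push_cast
  linear_combination (1 - I) / 2 * h2

theorem re_decayRate (ω : ℝ) : (decayRate ω).re = √ω := by simp [decayRate]

theorem norm_decayRate (ω : ℝ) : ‖decayRate ω‖ = √2 * √ω := by
  rw [decayRate, norm_mul, Complex.norm_real, Real.norm_of_nonneg (Real.sqrt_nonneg _)]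
  congr 1
  rw [Complex.norm_def, Complex.normSq_apply]
  norm_num

theorem norm_decayRate_sq {ω : ℝ} (h : 0 ≤ ω) : ‖decayRate ω‖ ^ 2 = 2 * ω := by
  rw [norm_decayRate, mul_pow, Real.sq_sqrt zero_le_two, Real.sq_sqrt h]

theorem sq_decayRate {ω : ℝ} (h : 0 ≤ ω) : decayRate ω ^ 2 = -(2 * I * ω) := by
  rw [decayRate, mul_pow, ← Complex.ofReal_pow, Real.sq_sqrt h]
  linear_combination (ω : ℂ) * I_sq

theorem sqrt_le_norm_decayRate (ω : ℝ) : √ω ≤ ‖decayRate ω‖ := by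
  rw [norm_decayRate]
  exact le_mul_of_one_le_left (Real.sqrt_nonneg _) (Real.one_le_sqrt.2 (by norm_num))

theorem norm_exp_neg_decayRate_mul (ω : ℝ) (j : ℕ) :
    ‖cexp (-(decayRate ω * j))‖ = rexp (-(j * √ω)) := by
  rw [Complex.norm_exp]
  simp [re_decayRate, mul_comm]

theorem norm_exp_neg_decayRate_mul_le_one (ω : ℝ) (j : ℕ) : ‖cexp (-(decayRate ω * j))‖ ≤ 1 := by
  rw [norm_exp_neg_decayRate_mul, Real.exp_le_one_iff, neg_nonpos]
  positivity

theorem norm_sqrtDiscr_sub_decayRate_le {ω : ℝ} (h0 : 0 < ω) (h : ω ≤ 1 / 2) :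
    ‖sqrtDiscr ω - decayRate ω‖ ≤ 4 * ω * √ω := by
  have hsqrt : 0 < √ω := Real.sqrt_pos.2 h0
  have hre : √ω ≤ (sqrtDiscr ω + decayRate ω).re := by
    rw [add_re, re_decayRate]
    linarith [re_sqrtDiscr_pos h0 (by linarith [Real.pi_gt_three])]
  have hx : ‖2 * I * ω‖ = 2 * ω := by simp [abs_of_pos h0]
  have hsq : ‖sqrtDiscr ω ^ 2 - decayRate ω ^ 2‖ ≤ 4 * ω ^ 2 := by
    have hdiff : sqrtDiscr ω ^ 2 - decayRate ω ^ 2 = -(cexp (2 * I * ω) - 1 - 2 * I * ω) := by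
      rw [sq_sqrtDiscr (Real.sin_nonneg_of_nonneg_of_le_pi h0.le (by linarith [Real.pi_gt_three])),
        sq_decayRate h0.le, ← Complex.exp_nat_mul]
      push_cast; ring_nf
    rw [hdiff, norm_neg]
    refine (norm_exp_sub_one_sub_id_le (by rw [hx]; linarith)).trans ?_
    rw [hx]; nlinarith
  have := (mul_le_mul_of_nonneg_left hre (norm_nonneg _)).trans
    ((norm_sub_mul_re_add_le _ _).trans hsq)
  have hω : ω = √ω * √ω := (Real.mul_self_sqrt h0.le).symm
  nlinarith

theorem norm_innerRoot_mul_exp_decayRate_sub_one_le {ω : ℝ} (h0 : 0 < ω) (h : ω ≤ 1 / 64) :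
    ‖innerRoot ω * cexp (decayRate ω) - 1‖ ≤ 16 * ω * √ω := by
  set s := sqrtDiscr ω
  set σ := decayRate ω
  have hω : √ω * √ω = ω := Real.mul_self_sqrt h0.le
  have hsqrt : √ω ≤ 1 / 8 := by nlinarith [Real.sqrt_nonneg ω]
  have hσ2 : ‖σ‖ ^ 2 = 2 * ω := norm_decayRate_sq h0.le
  have hσ1 : ‖σ‖ ≤ 1 := by nlinarith [norm_nonneg σ]
  have hσ3 : ‖σ‖ ^ 3 ≤ 3 * ω * √ω := by
    have hsqrt2 : √2 ≤ 3 / 2 := by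
      nlinarith [Real.sqrt_nonneg 2, Real.mul_self_sqrt (zero_le_two : (0 : ℝ) ≤ 2)]
    rw [pow_succ, hσ2, norm_decayRate]
    nlinarith [mul_nonneg h0.le (Real.sqrt_nonneg ω)]
  have hsplit : innerRoot ω * cexp σ - 1 = cexp (-(I * ω)) *
      (((1 - σ) * cexp σ - (1 - σ ^ 2 / 2)) + (σ - s) * cexp σ - (cexp (I * ω) - 1 - I * ω)) := by
    have hinv : cexp (-(I * ω)) * cexp (I * ω) = 1 := by rw [← Complex.exp_add]; simp
    rw [innerRoot, sq_decayRate h0.le]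
    linear_combination hinv
  have hexpσ : ‖cexp σ‖ ≤ 3 := by
    rw [Complex.norm_exp, re_decayRate]
    exact (Real.exp_le_exp.2 (by linarith)).trans (Real.exp_one_lt_d9.le.trans (by norm_num))
  have hIω : ‖I * ω‖ ≤ 1 := by simp [abs_of_pos h0]; linarith
  have hexp_sub : ‖cexp (I * ω) - 1 - I * ω‖ ≤ ω * √ω := by
    refine (norm_exp_sub_one_sub_id_le hIω).trans ?_
    simp [abs_of_pos h0]
    nlinarith [mul_le_mul_of_nonneg_left hsqrt (mul_nonneg h0.le (Real.sqrt_nonneg ω))]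
  have hshift : ‖(σ - s) * cexp σ‖ ≤ 4 * ω * √ω * 3 := by
    rw [norm_mul, norm_sub_rev]
    exact mul_le_mul (norm_sqrtDiscr_sub_decayRate_le h0 (by linarith)) hexpσ (norm_nonneg _)
      (by positivity)
  have hexp_neg : ‖cexp (-(I * ω))‖ = 1 := by simpa using norm_exp_I_mul_ofReal (-ω)
  rw [hsplit, norm_mul, hexp_neg, one_mul]
  calc _ ≤ ‖(1 - σ) * cexp σ - (1 - σ ^ 2 / 2)‖ + ‖(σ - s) * cexp σ‖
        + ‖cexp (I * ω) - 1 - I * ω‖ := norm_sub_le_of_le (norm_add_le _ _) le_rfl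
    _ ≤ 3 * ω * √ω + 4 * ω * √ω * 3 + ω * √ω := by
      gcongr
      exact (norm_one_sub_mul_exp_sub_le hσ1).trans hσ3
    _ = 16 * ω * √ω := by ring

theorem norm_innerRoot_pow_sub_exp_neg_decayRate_le {ω : ℝ} (h0 : 0 < ω) (h : ω ≤ 1 / 64)
    (j : ℕ) : ‖innerRoot ω ^ j - cexp (-(decayRate ω * j))‖ ≤ 16 * ω := by
  set σ := decayRate ω
  set ρ := innerRoot ω
  set E := cexp (-(σ * j))
  set d := ‖ρ * cexp σ - 1‖
  have hsqrt : 0 < √ω := Real.sqrt_pos.2 h0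
  have hE : ‖E‖ = rexp (-(j * √ω)) := norm_exp_neg_decayRate_mul ω j
  have hd : d ≤ 16 * ω * √ω := norm_innerRoot_mul_exp_decayRate_sub_one_le h0 h
  have hfactor : ρ ^ j - E = ((ρ * cexp σ) ^ j - 1) * E := by
    have hEσ : cexp σ ^ j * E = 1 := by
      rw [← Complex.exp_nat_mul, ← Complex.exp_add]; ring_nf; exact Complex.exp_zero
    linear_combination (-(ρ ^ j)) * hEσ
  rw [hfactor, norm_mul]
  calc ‖(ρ * cexp σ) ^ j - 1‖ * ‖E‖ ≤ j * d * rexp (j * d) * ‖E‖ := by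
        gcongr; exact norm_pow_sub_one_le _ _
    _ = d * (j * rexp (j * d - j * √ω)) := by
      rw [hE, sub_eq_add_neg, Real.exp_add]; ring
    _ ≤ 16 * ω * √ω * (j * rexp (-(j * √ω / 2))) := by
      gcongr
      nlinarith [mul_nonneg (Nat.cast_nonneg j : (0 : ℝ) ≤ j) hsqrt.le]
    _ = 16 * ω * ((j * √ω) * rexp (-(j * √ω / 2))) := by ring
    _ ≤ 16 * ω := mul_le_of_le_one_right (by positivity) (mul_exp_neg_half_le_one _)

theorem norm_pow_div_sub_exp_div_le_of_le {ω : ℝ} (h0 : 0 < ω) (h : ω ≤ 1 / 64) (j : ℕ) :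
    ‖innerRoot ω ^ j / sqrtDiscr ω - cexp (-(decayRate ω * j)) / decayRate ω‖ ≤ 20 * √ω := by
  set s := sqrtDiscr ω
  set σ := decayRate ω
  set E := cexp (-(σ * j))
  have hsqrt : 0 < √ω := Real.sqrt_pos.2 h0
  have hω : √ω * √ω = ω := Real.mul_self_sqrt h0.le
  have hs : √ω ≤ ‖s‖ := sqrt_le_norm_sqrtDiscr h0.le (by linarith [Real.pi_gt_three])
  have hσ : √ω ≤ ‖σ‖ := sqrt_le_norm_decayRate ω
  have hs0 : s ≠ 0 := norm_pos_iff.1 (hsqrt.trans_le hs)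
  have hσ0 : σ ≠ 0 := norm_pos_iff.1 (hsqrt.trans_le hσ)
  have hsplit :
      innerRoot ω ^ j / s - E / σ = (innerRoot ω ^ j - E) / s + E * (σ - s) / (s * σ) := by
    field_simp
    ring
  have hA : ‖(innerRoot ω ^ j - E) / s‖ ≤ 16 * √ω := by
    rw [norm_div, div_le_iff₀ (hsqrt.trans_le hs)]
    calc ‖innerRoot ω ^ j - E‖ ≤ 16 * ω := norm_innerRoot_pow_sub_exp_neg_decayRate_le h0 h j
      _ = 16 * √ω * √ω := by rw [mul_assoc, hω]
      _ ≤ 16 * √ω * ‖s‖ := by gcongr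
  have hB : ‖E * (σ - s) / (s * σ)‖ ≤ 4 * √ω := by
    rw [norm_div, norm_mul, norm_mul, norm_sub_rev,
      div_le_iff₀ (mul_pos (hsqrt.trans_le hs) (hsqrt.trans_le hσ))]
    calc ‖E‖ * ‖s - σ‖ ≤ 1 * (4 * ω * √ω) :=
          mul_le_mul (norm_exp_neg_decayRate_mul_le_one ω j)
            (norm_sqrtDiscr_sub_decayRate_le h0 (by linarith)) (norm_nonneg _) zero_le_one
      _ = 4 * √ω * (√ω * √ω) := by rw [hω]; ring
      _ ≤ 4 * √ω * (‖s‖ * ‖σ‖) := by gcongr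
  rw [hsplit]
  linarith [norm_add_le ((innerRoot ω ^ j - E) / s) (E * (σ - s) / (s * σ))]

theorem norm_pow_div_sub_exp_div_le_of_ge {ω : ℝ} (h : 1 / 64 ≤ ω) (hω : ω ≤ π / 2) (j : ℕ) :
    ‖innerRoot ω ^ j / sqrtDiscr ω - cexp (-(decayRate ω * j)) / decayRate ω‖ ≤ 128 * √ω := by
  have h0 : 0 < ω := by linarith
  have hsqrt : 0 < √ω := Real.sqrt_pos.2 h0
  have hs : √ω ≤ ‖sqrtDiscr ω‖ := sqrt_le_norm_sqrtDiscr h0.le hω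
  have hσ : √ω ≤ ‖decayRate ω‖ := sqrt_le_norm_decayRate ω
  have hρ : ‖innerRoot ω ^ j‖ ≤ 1 := by
    rw [norm_pow]
    exact pow_le_one₀ (norm_nonneg _) (norm_innerRoot_lt_one h0 (by linarith [Real.pi_pos])).le
  have hE : ‖cexp (-(decayRate ω * j))‖ ≤ 1 := norm_exp_neg_decayRate_mul_le_one ω j
  calc _ ≤ ‖innerRoot ω ^ j / sqrtDiscr ω‖ + ‖cexp (-(decayRate ω * j)) / decayRate ω‖ :=
        norm_sub_le _ _
    _ ≤ 1 / √ω + 1 / √ω := by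
      rw [norm_div, norm_div]
      gcongr
    _ ≤ 128 * √ω := by
      rw [← add_div, div_le_iff₀ hsqrt, mul_assoc, Real.mul_self_sqrt h0.le]
      linarith

theorem norm_pow_div_sub_exp_div_le {ω : ℝ} (h0 : 0 < ω) (hω : ω ≤ π / 2) (j : ℕ) :
    ‖innerRoot ω ^ j / sqrtDiscr ω - cexp (-(decayRate ω * j)) / decayRate ω‖ ≤ 128 * √ω := by
  rcases le_total ω (1 / 64) with h | h
  · exact (norm_pow_div_sub_exp_div_le_of_le h0 h j).trans (by gcongr; norm_num)
  · exact norm_pow_div_sub_exp_div_le_of_ge h hω j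

theorem sqrt_two_mul_exp_div_sqrt_mul_exp_eq {ω : ℝ} (h0 : 0 < ω) (j : ℕ) :
    (√2 : ℂ) * π * cexp (I * π / 4) * ((√ω)⁻¹ : ℝ) *
      cexp (-(√2 : ℂ) * cexp (-(I * π / 4)) * √ω * j)
      = 2 * π * (cexp (-(decayRate ω * j)) / decayRate ω) := by
  have hsqrt : (√ω : ℂ) ≠ 0 := ofReal_ne_zero.2 (Real.sqrt_pos.2 h0).ne'
  have hexp : -(√2 : ℂ) * cexp (-(I * π / 4)) * √ω * j = -(decayRate ω * j) := by
    rw [decayRate, ← sqrt_two_mul_exp_neg_I_mul_pi_div_four]; ring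
  have h1I : (1 - I : ℂ) ≠ 0 := fun h ↦ by simpa using congrArg Complex.im h
  rw [hexp, decayRate, ofReal_inv, mul_div_assoc', eq_div_iff (mul_ne_zero h1I hsqrt)]
  set E := cexp (-((1 - I) * √ω * j))
  have hw : ((√ω : ℝ) : ℂ)⁻¹ * √ω = 1 := inv_mul_cancel₀ hsqrt
  linear_combination π * E * (1 - I) * ((√ω : ℝ) : ℂ)⁻¹ * √ω * sqrt_two_mul_exp_I_mul_pi_div_four
    + π * E * (1 + I) * (1 - I) * hw - π * E * I_sq

theorem stmt_13 :
    ∃ C : ℝ, 0 < C ∧ ∀ ω : ℝ, ω ∈ Set.Ioc (0:ℝ) (π / 2) → ∀ j : ℕ, 1 ≤ j →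
      ‖(∫ φ in (-π:ℝ)..π,
            Complex.exp (Complex.I * j * φ) / (1 - Complex.exp (Complex.I * ω) * (Real.cos φ : ℂ)))
          - Real.sqrt 2 * π * Complex.exp (Complex.I * π / 4) * ((Real.sqrt ω)⁻¹ : ℝ) *
            Complex.exp (-(Real.sqrt 2 : ℂ) * Complex.exp (-(Complex.I * π / 4)) *
              (Real.sqrt ω : ℂ) * j)‖
        ≤ C * ((j : ℝ)⁻¹ + Real.sqrt ω) := by
  refine ⟨256 * π, by positivity, fun ω ⟨h0, hω⟩ j _ ↦ ?_⟩
  rw [integral_exp_mul_div_one_sub_exp_mul_cos h0 (by linarith [Real.pi_pos]) j,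
    sqrt_two_mul_exp_div_sqrt_mul_exp_eq h0 j, mul_div_assoc, ← mul_sub, norm_mul]
  have h2π : ‖(2 * π : ℂ)‖ = 2 * π := by simp [abs_of_pos Real.pi_pos]
  calc ‖(2 * π : ℂ)‖ * _ ≤ 2 * π * (128 * √ω) := by
        rw [h2π]; gcongr; exact norm_pow_div_sub_exp_div_le h0 hω j
    _ ≤ 256 * π * ((j : ℝ)⁻¹ + √ω) := by
        have : (0 : ℝ) ≤ (j : ℝ)⁻¹ := by positivity
        nlinarith [Real.pi_pos]
end

section
/- For every real t > 0 and every real j > 0, ∫₀^{∞} ω^{−1/2} · exp( iωt − √2·e^{iπ/4}·ω^{1/2}·j ) dω = 2·e^{iπ/4} · ∫₀^{∞} exp( −t x² − i√2·j·x ) dx. -/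
open Real Complex MeasureTheory Set Filter Topology

noncomputable def myF (t j θ u : ℝ) : ℂ :=
  Complex.exp (Complex.I * θ) *
    Complex.exp (Complex.I * t * (Complex.exp (Complex.I * θ) * u) ^ 2
      - (j : ℂ) * (1 + Complex.I) * (Complex.exp (Complex.I * θ) * u))

noncomputable def myD (t j θ u : ℝ) : ℂ :=
  myF t j θ u * (1 + 2 * Complex.I * t * (Complex.exp (Complex.I * θ)) ^ 2 * u ^ 2
      - (j : ℂ) * (1 + Complex.I) * (Complex.exp (Complex.I * θ)) * u)

lemma hasDerivAt_myF_theta (t j u θ : ℝ) :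
    HasDerivAt (fun θ : ℝ => myF t j θ u) (Complex.I * myD t j θ u) θ := by
  have he : ∀ z : ℂ, HasDerivAt (fun z : ℂ => Complex.exp (Complex.I * z))
      (Complex.exp (Complex.I * z) * Complex.I) z := by
    intro z
    simpa using ((hasDerivAt_id z).const_mul Complex.I).cexp
  have hinner : HasDerivAt (fun z : ℂ => Complex.I * t * (Complex.exp (Complex.I * z) * u) ^ 2
      - (j : ℂ) * (1 + Complex.I) * (Complex.exp (Complex.I * z) * u))
      (Complex.I * t * (2 * (Complex.exp (Complex.I * θ) * u) ^ 1 *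
          (Complex.exp (Complex.I * θ) * Complex.I * u))
        - (j : ℂ) * (1 + Complex.I) * (Complex.exp (Complex.I * θ) * Complex.I * u)) (θ : ℂ) := by
    have h2 : HasDerivAt (fun z : ℂ => Complex.exp (Complex.I * z) * u)
        (Complex.exp (Complex.I * θ) * Complex.I * u) (θ : ℂ) := (he θ).mul_const _
    exact ((h2.pow 2).const_mul _).sub (h2.const_mul _)
  have key := ((he (θ : ℂ)).mul hinner.cexp).comp_ofReal
  convert key using 1
  · rfl
  rw [myD, myF]
  ring

lemma hasDerivAt_mul_myF_u (t j θ u : ℝ) :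
    HasDerivAt (fun u : ℝ => (u : ℂ) * myF t j θ u) (myD t j θ u) u := by
  have hinner : HasDerivAt (fun w : ℂ => Complex.I * t * (Complex.exp (Complex.I * (θ:ℝ)) * w) ^ 2
      - (j : ℂ) * (1 + Complex.I) * (Complex.exp (Complex.I * (θ:ℝ)) * w))
      (Complex.I * t * (2 * (Complex.exp (Complex.I * (θ:ℝ)) * u) ^ 1 *
          (Complex.exp (Complex.I * (θ:ℝ)) * 1))
        - (j : ℂ) * (1 + Complex.I) * (Complex.exp (Complex.I * (θ:ℝ)) * 1)) (u : ℂ) := by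
    have h2 : HasDerivAt (fun w : ℂ => Complex.exp (Complex.I * (θ:ℝ)) * w)
        (Complex.exp (Complex.I * (θ:ℝ)) * 1) (u : ℂ) :=
      (hasDerivAt_id _).const_mul _
    exact ((h2.pow 2).const_mul _).sub (h2.const_mul _)
  have key := ((hasDerivAt_id (u:ℂ)).mul ((hinner.cexp).const_mul
      (Complex.exp (Complex.I * (θ:ℝ))))).comp_ofReal
  convert key using 1
  · rfl
  rw [myD, myF]
  simp only [id_eq]
  ring

lemma integrable_poly_exp {σ κ a b : ℝ} (hσ : 0 < σ) (ha : 0 ≤ a) (hb : 0 ≤ b) :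
    IntegrableOn (fun u : ℝ => (1 + a*u^2 + b*u) * Real.exp (κ*u - σ*u^2)) (Ioi 0) := by
  set C := Real.exp (κ^2/(2*σ)) with hC
  have hσ2 : 0 < σ/2 := by positivity
  have i0 : Integrable (fun u : ℝ => C * Real.exp (-(σ/2)*u^2)) :=
    (integrable_exp_neg_mul_sq hσ2).const_mul C
  have i1 : Integrable (fun u : ℝ => (b*C) * (u * Real.exp (-(σ/2)*u^2))) := by
    have := integrable_rpow_mul_exp_neg_mul_sq hσ2 (s := 1) (by norm_num)
    simp only [Real.rpow_one] at this
    exact this.const_mul (b*C)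
  have i2 : Integrable (fun u : ℝ => (a*C) * (u^2 * Real.exp (-(σ/2)*u^2))) := by
    have := integrable_rpow_mul_exp_neg_mul_sq hσ2 (s := 2) (by norm_num)
    simp only [Real.rpow_two] at this
    exact this.const_mul (a*C)
  refine Integrable.mono' (((i0.add i2).add i1).integrableOn) ?_ ?_
  · exact (Continuous.aestronglyMeasurable (by fun_prop))
  · filter_upwards [ae_restrict_mem measurableSet_Ioi] with u hu
    simp only [mem_Ioi] at hu
    have hpoly : 0 ≤ 1 + a*u^2 + b*u := by positivity
    have h1 : Real.exp (κ*u - σ*u^2) ≤ C * Real.exp (-(σ/2)*u^2) := by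
      rw [hC, ← Real.exp_add]
      apply Real.exp_le_exp.2
      have hcan : κ^2/(2*σ)*(2*σ) = κ^2 := div_mul_cancel₀ _ (by positivity)
      nlinarith [sq_nonneg (κ - σ*u), hσ, sq_nonneg u]
    simp only [Pi.add_apply]
    have : ‖(1 + a*u^2 + b*u) * Real.exp (κ*u - σ*u^2)‖
        = (1 + a*u^2 + b*u) * Real.exp (κ*u - σ*u^2) := by
      rw [Real.norm_eq_abs]
      exact _root_.abs_of_nonneg (by positivity)
    rw [this]
    calc (1 + a*u^2 + b*u) * Real.exp (κ*u - σ*u^2)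
        ≤ (1 + a*u^2 + b*u) * (C * Real.exp (-(σ/2)*u^2)) :=
          mul_le_mul_of_nonneg_left h1 hpoly
      _ = C * Real.exp (-(σ/2)*u^2) + (a*C) * (u^2 * Real.exp (-(σ/2)*u^2))
          + (b*C) * (u * Real.exp (-(σ/2)*u^2)) := by ring
lemma exp_I_theta (θ : ℝ) : Complex.exp (Complex.I * θ)
    = (Real.cos θ : ℂ) + (Real.sin θ : ℂ) * Complex.I := by
  rw [mul_comm, Complex.exp_mul_I]
  simp [Complex.ofReal_cos, Complex.ofReal_sin]

lemma norm_myF (t j θ u : ℝ) : ‖myF t j θ u‖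
    = Real.exp (-(t * Real.sin (2*θ)) * u^2 - j * (Real.cos θ - Real.sin θ) * u) := by
  rw [myF, norm_mul, Complex.norm_exp,
    Complex.norm_exp, ← Real.exp_add]
  congr 1
  have h := exp_I_theta θ
  rw [h]
  simp [Complex.add_re, Complex.mul_re, Complex.mul_im, Real.sin_two_mul, pow_two, Complex.cos_ofReal_re, Complex.sin_ofReal_re]
  ring

lemma sin_lb {θ₀ θ : ℝ} (h0 : 0 < θ₀) (h4 : θ₀ ≤ π/4) (hl : θ₀/2 < θ) (hr : θ < 3*θ₀/2) :
    Real.sin θ₀ ≤ Real.sin (2*θ) := by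
  have hπ := Real.pi_gt_three
  rcases le_or_gt (2*θ) (π/2) with h | h
  · exact Real.sin_le_sin_of_le_of_le_pi_div_two (by linarith) h (by linarith)
  · rw [show (2:ℝ)*θ = π - (π - 2*θ) by ring, Real.sin_pi_sub]
    exact Real.sin_le_sin_of_le_of_le_pi_div_two (by linarith) (by linarith) (by linarith)

lemma cos_sub_sin_nonneg {θ : ℝ} (h0 : 0 ≤ θ) (h4 : θ ≤ π/4) :
    0 ≤ Real.cos θ - Real.sin θ := by
  have hπ := Real.pi_gt_three
  have h1 : Real.sin θ ≤ Real.sin (π/4) :=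
    Real.sin_le_sin_of_le_of_le_pi_div_two (by linarith) (by linarith) h4
  have h2 : Real.cos (π/4) ≤ Real.cos θ :=
    Real.cos_le_cos_of_nonneg_of_le_pi h0 (by linarith) h4
  rw [Real.sin_pi_div_four] at h1
  rw [Real.cos_pi_div_four] at h2
  linarith

lemma norm_myD_le (t j : ℝ) (ht : 0 < t) (hj : 0 < j) (θ : ℝ) {u : ℝ} (hu : 0 < u) :
    ‖myD t j θ u‖ ≤ (1 + 2*t*u^2 + 2*j*u) *
      Real.exp (-(t * Real.sin (2*θ)) * u^2 - j * (Real.cos θ - Real.sin θ) * u) := by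
  rw [myD, norm_mul, norm_myF]
  rw [mul_comm ((1 + 2*t*u^2 + 2*j*u)) _]
  apply mul_le_mul_of_nonneg_left _ (Real.exp_nonneg _)
  have hexp1 : ‖Complex.exp (Complex.I * (θ:ℝ))‖ = 1 := by
    rw [Complex.norm_exp]
    simp
  calc ‖1 + 2 * Complex.I * t * (Complex.exp (Complex.I * θ)) ^ 2 * u ^ 2
        - (j : ℂ) * (1 + Complex.I) * (Complex.exp (Complex.I * θ)) * u‖
      ≤ ‖(1:ℂ)‖ + ‖2 * Complex.I * (t:ℂ) * (Complex.exp (Complex.I * θ)) ^ 2 * (u:ℂ) ^ 2‖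
        + ‖(j : ℂ) * (1 + Complex.I) * (Complex.exp (Complex.I * θ)) * u‖ := by
        apply (norm_sub_le _ _).trans
        gcongr
        exact norm_add_le _ _
    _ ≤ 1 + 2*t*u^2 + 2*j*u := by
        simp only [norm_mul, norm_pow, hexp1, norm_one, one_pow, mul_one, one_mul]
        have h1I : ‖(1:ℂ) + Complex.I‖ ≤ 2 := by
          apply (norm_add_le _ _).trans
          simp
          norm_num
        have : ‖(2:ℂ)‖ = 2 := by norm_num
        rw [this]
        simp only [Complex.norm_I, mul_one, Complex.norm_real, Real.norm_eq_abs,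
          _root_.abs_of_nonneg ht.le, _root_.abs_of_nonneg hj.le, _root_.abs_of_nonneg hu.le]
        have h2 := mul_le_mul_of_nonneg_right (mul_le_mul_of_nonneg_left h1I hj.le) hu.le
        linarith

lemma integrableOn_myD (t j : ℝ) (ht : 0 < t) (hj : 0 < j) {θ : ℝ} (hσ : 0 < Real.sin (2*θ)) :
    IntegrableOn (fun u => myD t j θ u) (Ioi (0:ℝ)) := by
  refine Integrable.mono'
    (integrable_poly_exp (σ := t * Real.sin (2*θ)) (κ := 2*j) (by positivity)
      (by positivity : (0:ℝ) ≤ 2*t) (by positivity : (0:ℝ) ≤ 2*j)) ?_ ?_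
  · exact Continuous.aestronglyMeasurable (by unfold myD myF; fun_prop)
  · filter_upwards [ae_restrict_mem measurableSet_Ioi] with u hu
    simp only [mem_Ioi] at hu
    refine (norm_myD_le t j ht hj θ hu).trans ?_
    apply mul_le_mul_of_nonneg_left _ (by positivity)
    apply Real.exp_le_exp.2
    have h1 : -(j * (Real.cos θ - Real.sin θ) * u) ≤ 2*j * u := by
      have hc : Real.cos θ - Real.sin θ ≥ -2 := by
        nlinarith [Real.neg_one_le_cos θ, Real.sin_le_one θ]
      nlinarith [mul_nonneg (mul_nonneg hj.le (by linarith : (0:ℝ) ≤ Real.cos θ - Real.sin θ + 2)) hu.le]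
    linarith

lemma integral_myD_eq_zero (t j : ℝ) (ht : 0 < t) (hj : 0 < j) {θ : ℝ} (h0 : 0 < θ)
    (h4 : θ ≤ π/4) : ∫ u in Ioi (0:ℝ), myD t j θ u = 0 := by
  have hπ := Real.pi_gt_three
  have hσ : 0 < Real.sin (2*θ) := Real.sin_pos_of_pos_of_lt_pi (by linarith) (by linarith)
  have hκ := cos_sub_sin_nonneg h0.le h4
  have htends : Tendsto (fun u : ℝ => (u:ℂ) * myF t j θ u) atTop (𝓝 0) := by
    have hb : 0 < t * Real.sin (2*θ) := by positivity
    have hlo : (fun x : ℝ => x * Real.exp (-(t * Real.sin (2*θ)) * x^2)) =o[atTop]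
        fun x : ℝ => Real.exp (-(1/2) * x) := by
      simpa [Real.rpow_one] using rpow_mul_exp_neg_mul_sq_isLittleO_exp_neg hb 1
    have h1 : Tendsto (fun x : ℝ => (1/2 : ℝ)*x) atTop atTop :=
      Tendsto.const_mul_atTop (by norm_num) tendsto_id
    have hexp0 : Tendsto (fun x : ℝ => Real.exp (-(1/2) * x)) atTop (𝓝 0) :=
      (Real.tendsto_exp_neg_atTop_nhds_zero.comp h1).congr (fun x => by simp [neg_mul])
    apply squeeze_zero_norm' ?_ (hlo.isBigO.trans_tendsto hexp0)
    filter_upwards [eventually_ge_atTop (0:ℝ)] with u hu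
    rw [norm_mul, norm_myF, Complex.norm_real, Real.norm_eq_abs, _root_.abs_of_nonneg hu]
    apply mul_le_mul_of_nonneg_left _ hu
    apply Real.exp_le_exp.2
    nlinarith [mul_nonneg (mul_nonneg hj.le hκ) hu]
  have key := integral_Ioi_of_hasDerivAt_of_tendsto
    (f := fun u : ℝ => (u:ℂ) * myF t j θ u) (f' := fun u => myD t j θ u) (a := 0)
    ((hasDerivAt_mul_myF_u t j θ 0).continuousAt.continuousWithinAt)
    (fun x _ => hasDerivAt_mul_myF_u t j θ x)
    (integrableOn_myD t j ht hj hσ) htends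
  simpa using key

lemma exp_bound_aux (t j : ℝ) (ht : 0 < t) (hj : 0 < j) {θ₀ θ u : ℝ} (h0 : 0 < θ₀)
    (h4 : θ₀ ≤ π/4) (hl : θ₀/2 < θ) (hr : θ < 3*θ₀/2) (hu : 0 < u) :
    Real.exp (-(t * Real.sin (2*θ)) * u^2 - j * (Real.cos θ - Real.sin θ) * u)
      ≤ Real.exp (2*j*u - (t * Real.sin θ₀)*u^2) := by
  apply Real.exp_le_exp.2
  have hs := sin_lb h0 h4 hl hr
  have hc : Real.cos θ - Real.sin θ ≥ -2 := by
    nlinarith [Real.neg_one_le_cos θ, Real.sin_le_one θ]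
  have h1 : -(j * (Real.cos θ - Real.sin θ) * u) ≤ 2*j*u := by
    nlinarith [mul_nonneg (mul_nonneg hj.le (by linarith : (0:ℝ) ≤ Real.cos θ - Real.sin θ + 2)) hu.le]
  nlinarith [mul_nonneg (mul_nonneg ht.le (by linarith : (0:ℝ) ≤ Real.sin (2*θ) - Real.sin θ₀)) (sq_nonneg u)]

lemma hasDerivAt_intF (t j : ℝ) (ht : 0 < t) (hj : 0 < j) {θ₀ : ℝ} (h0 : 0 < θ₀)
    (h4 : θ₀ ≤ π/4) :
    HasDerivAt (fun θ : ℝ => ∫ u in Ioi (0:ℝ), myF t j θ u) 0 θ₀ := by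
  have hπ := Real.pi_gt_three
  have hσ0 : 0 < Real.sin θ₀ := Real.sin_pos_of_pos_of_lt_pi h0 (by linarith)
  set bound : ℝ → ℝ := fun u => (1 + 2*t*u^2 + 2*j*u) * Real.exp (2*j*u - (t*Real.sin θ₀)*u^2)
    with hbdef
  have hbi : IntegrableOn bound (Ioi 0) :=
    integrable_poly_exp (by positivity) (by positivity) (by positivity)
  have hball : ∀ θ ∈ Metric.ball θ₀ (θ₀/2), θ₀/2 < θ ∧ θ < 3*θ₀/2 := by
    intro θ hθ
    rw [Metric.mem_ball, Real.dist_eq, abs_sub_lt_iff] at hθ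
    constructor <;> linarith [hθ.1, hθ.2]
  have key := hasDerivAt_integral_of_dominated_loc_of_deriv_le
    (F := fun (θ : ℝ) (u : ℝ) => myF t j θ u)
    (F' := fun (θ : ℝ) (u : ℝ) => Complex.I * myD t j θ u) (x₀ := θ₀) (s := Metric.ball θ₀ (θ₀/2))
    (bound := bound) (μ := volume.restrict (Ioi 0)) (Metric.ball_mem_nhds _ (by positivity))
    (Eventually.of_forall fun θ =>
      Continuous.aestronglyMeasurable (by unfold myF; fun_prop))
    ?_ (Continuous.aestronglyMeasurable (by unfold myD myF; fun_prop)) ?_ hbi ?_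
  · have hz : (∫ u in Ioi (0:ℝ), Complex.I * myD t j θ₀ u) = 0 := by
      rw [integral_const_mul, integral_myD_eq_zero t j ht hj h0 h4, mul_zero]
    rw [hz] at key
    exact key.2
  · -- Integrable (myF θ₀)
    refine Integrable.mono' hbi (Continuous.aestronglyMeasurable (by unfold myF; fun_prop)) ?_
    filter_upwards [ae_restrict_mem measurableSet_Ioi] with u hu
    simp only [mem_Ioi] at hu
    rw [norm_myF]
    calc Real.exp (-(t * Real.sin (2*θ₀)) * u^2 - j * (Real.cos θ₀ - Real.sin θ₀) * u)
        ≤ Real.exp (2*j*u - (t * Real.sin θ₀)*u^2) :=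
          exp_bound_aux t j ht hj h0 h4 (by linarith) (by linarith) hu
      _ ≤ bound u := by
          simp only [hbdef]
          have : (0:ℝ) ≤ 2*t*u^2 + 2*j*u := by positivity
          nlinarith [Real.exp_nonneg (2*j*u - (t*Real.sin θ₀)*u^2)]
  · -- bound on F'
    filter_upwards [ae_restrict_mem measurableSet_Ioi] with u hu
    intro θ hθ
    simp only [mem_Ioi] at hu
    obtain ⟨hl, hr⟩ := hball θ hθ
    rw [norm_mul, Complex.norm_I, one_mul]
    exact (norm_myD_le t j ht hj θ hu).trans
      (mul_le_mul_of_nonneg_left (exp_bound_aux t j ht hj h0 h4 hl hr hu) (by positivity))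
  · exact Eventually.of_forall fun u θ _ => hasDerivAt_myF_theta t j u θ

lemma intF_zero_eq (t j : ℝ) (ht : 0 < t) (hj : 0 < j) :
    (∫ u in Ioi (0:ℝ), myF t j 0 u) = ∫ u in Ioi (0:ℝ), myF t j (π/4) u := by
  have hπ := Real.pi_gt_three
  set g : ℝ → ℂ := fun θ => ∫ u in Ioi (0:ℝ), myF t j θ u with hg
  have hconst : ∀ θ ∈ Ioc (0:ℝ) (π/4), g (π/4) = g θ := by
    intro θ hθ
    obtain ⟨hθ0, hθ4⟩ := hθ
    have := constant_of_has_deriv_right_zero (f := g) (a := θ) (b := π/4)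
      (fun x hx => (hasDerivAt_intF t j ht hj (lt_of_lt_of_le hθ0 hx.1) hx.2).continuousAt.continuousWithinAt)
      (fun x hx => (hasDerivAt_intF t j ht hj (lt_of_lt_of_le hθ0 hx.1) hx.2.le).hasDerivWithinAt)
    exact this (π/4) ⟨hθ4, le_refl _⟩
  -- continuity at 0 from the right
  have hκ : 0 < Real.cos (π/8) - Real.sin (π/8) := by
    have h1 : Real.sin (π/8) < Real.sin (π/2 - π/8) := by
      apply Real.strictMonoOn_sin ⟨by linarith, by linarith⟩ ⟨by linarith, by linarith⟩
      linarith
    rw [Real.sin_pi_div_two_sub] at h1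
    linarith
  have hT1 : Tendsto g (𝓝[>] (0:ℝ)) (𝓝 (g 0)) := by
    apply tendsto_integral_filter_of_dominated_convergence
      (bound := fun u => Real.exp (-(j * (Real.cos (π/8) - Real.sin (π/8))) * u))
    · exact Eventually.of_forall fun θ =>
        Continuous.aestronglyMeasurable (by unfold myF; fun_prop)
    · filter_upwards [Ioc_mem_nhdsGT (by linarith : (0:ℝ) < π/8)] with θ hθ
      filter_upwards [ae_restrict_mem measurableSet_Ioi] with u hu
      simp only [mem_Ioi] at hu
      rw [norm_myF]
      apply Real.exp_le_exp.2
      have hs2 : 0 ≤ Real.sin (2*θ) :=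
        Real.sin_nonneg_of_nonneg_of_le_pi (by linarith [hθ.1]) (by linarith [hθ.2])
      have hcos : Real.cos (π/8) ≤ Real.cos θ :=
        Real.cos_le_cos_of_nonneg_of_le_pi hθ.1.le (by linarith) hθ.2
      have hsin : Real.sin θ ≤ Real.sin (π/8) :=
        Real.sin_le_sin_of_le_of_le_pi_div_two (by linarith [hθ.1]) (by linarith) hθ.2
      nlinarith [mul_nonneg (mul_nonneg ht.le hs2) (sq_nonneg u), hu.le, hj.le,
        mul_nonneg (mul_nonneg hj.le (by linarith : (0:ℝ) ≤ (Real.cos θ - Real.sin θ) - (Real.cos (π/8) - Real.sin (π/8)))) hu.le]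
    · exact exp_neg_integrableOn_Ioi 0 (by positivity)
    · refine Eventually.of_forall fun u => ?_
      exact ((Continuous.tendsto (by unfold myF; fun_prop) 0).mono_left nhdsWithin_le_nhds)
  have hT2 : Tendsto g (𝓝[>] (0:ℝ)) (𝓝 (g (π/4))) := by
    apply Tendsto.congr' _ tendsto_const_nhds
    filter_upwards [Ioc_mem_nhdsGT (by linarith : (0:ℝ) < π/4)] with θ hθ
    exact hconst θ hθ
  exact tendsto_nhds_unique hT1 hT2

lemma exp_pi_quarter : Complex.exp (Complex.I * (π:ℂ) / 4)
    = ((Real.sqrt 2 / 2 : ℝ) : ℂ) * (1 + Complex.I) := by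
  have h : Complex.I * (π:ℂ) / 4 = ((π/4 : ℝ) : ℂ) * Complex.I := by push_cast; ring
  rw [h, Complex.exp_mul_I, ← Complex.ofReal_cos, ← Complex.ofReal_sin,
    Real.cos_pi_div_four, Real.sin_pi_div_four]
  push_cast
  ring

lemma sqrt2_sq : ((Real.sqrt 2 : ℝ) : ℂ) * ((Real.sqrt 2 : ℝ) : ℂ) = 2 := by
  norm_cast
  exact Real.mul_self_sqrt (by norm_num)

lemma sqrt2_exp : ((Real.sqrt 2 : ℝ) : ℂ) * Complex.exp (Complex.I * (π:ℂ) / 4)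
    = 1 + Complex.I := by
  rw [exp_pi_quarter]
  push_cast
  linear_combination ((1 + Complex.I)/2) * sqrt2_sq

lemma exp_quarter_sq : (Complex.exp (Complex.I * (π:ℂ) / 4))^2 = Complex.I := by
  rw [exp_pi_quarter]
  push_cast
  linear_combination ((1 + Complex.I)^2/4) * sqrt2_sq + (1/2 : ℂ) * Complex.I_sq

theorem stmt_14 (t j : ℝ) (ht : 0 < t) (hj : 0 < j) :
    ∫ ω in Set.Ioi (0:ℝ),
        ((Real.sqrt ω)⁻¹ : ℂ) *
          Complex.exp (Complex.I * ω * t -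
            (Real.sqrt 2 : ℂ) * Complex.exp (Complex.I * π / 4) * (Real.sqrt ω : ℂ) * j)
    = 2 * Complex.exp (Complex.I * π / 4) *
        ∫ x in Set.Ioi (0:ℝ),
          Complex.exp (-(t : ℂ) * x ^ 2 - Complex.I * (Real.sqrt 2 : ℂ) * j * x) := by
  have hA : (∫ ω in Ioi (0:ℝ), ((Real.sqrt ω)⁻¹ : ℂ) *
      Complex.exp (Complex.I * ω * t -
        (Real.sqrt 2 : ℂ) * Complex.exp (Complex.I * π / 4) * (Real.sqrt ω : ℂ) * j))
      = ∫ u in Ioi (0:ℝ), 2 * myF t j 0 u := by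
    rw [← integral_comp_rpow_Ioi_of_pos (p := 2)
      (g := fun ω : ℝ => ((Real.sqrt ω)⁻¹ : ℂ) *
        Complex.exp (Complex.I * ω * t -
          (Real.sqrt 2 : ℂ) * Complex.exp (Complex.I * π / 4) * (Real.sqrt ω : ℂ) * j))
      two_pos]
    apply setIntegral_congr_fun measurableSet_Ioi
    intro x hx
    simp only [mem_Ioi] at hx
    have hxne : (x:ℂ) ≠ 0 := by exact_mod_cast hx.ne'
    beta_reduce
    rw [show (2:ℝ) - 1 = 1 by norm_num, Real.rpow_one, Real.rpow_two, Real.sqrt_sq hx.le]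
    rw [Complex.real_smul, myF]
    have h0 : Complex.exp (Complex.I * ((0:ℝ):ℂ)) = 1 := by simp
    rw [h0, one_mul, one_mul]
    have harg : Complex.I * ((x^2 : ℝ):ℂ) * (t:ℂ) -
        (Real.sqrt 2 : ℂ) * Complex.exp (Complex.I * (π:ℂ) / 4) * ((x:ℝ) : ℂ) * (j:ℂ)
        = Complex.I * (t:ℂ) * ((x:ℂ))^2 - (j:ℂ) * (1 + Complex.I) * ((x:ℂ)) := by
      push_cast
      linear_combination (-(x:ℂ)*(j:ℂ)) * sqrt2_exp
    rw [harg]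
    push_cast
    field_simp
  have hB : (∫ u in Ioi (0:ℝ), myF t j (π/4) u)
      = Complex.exp (Complex.I * (π:ℂ) / 4) *
        ∫ x in Ioi (0:ℝ),
          Complex.exp (-(t : ℂ) * x ^ 2 - Complex.I * (Real.sqrt 2 : ℂ) * j * x) := by
    rw [← integral_const_mul]
    apply setIntegral_congr_fun measurableSet_Ioi
    intro x hx
    rw [myF]
    have hc : Complex.I * ((π/4 : ℝ) : ℂ) = Complex.I * (π:ℂ)/4 := by push_cast; ring
    rw [hc]
    congr 1
    congr 1
    linear_combination (Complex.I*(t:ℂ)*(x:ℂ)^2 - (j:ℂ)*(x:ℂ)*((Real.sqrt 2 : ℝ):ℂ)) * exp_quarter_sq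
      + ((t:ℂ)*(x:ℂ)^2) * Complex.I_sq
      + ((j:ℂ)*(x:ℂ)*Complex.exp (Complex.I*(π:ℂ)/4)) * sqrt2_exp
  rw [hA, integral_const_mul, intF_zero_eq t j ht hj, hB]
  ring
end

section
/- For every real t > 0 and every real j > 0, ∫₀^{∞} exp( iωt − √2·e^{iπ/4}·ω^{1/2}·j ) dω = 2i · ∫₀^{∞} x · exp( −t x² − i√2·j·x ) dx. -/
/-!
Substituting `ω = x ^ 2` turns the left-hand side into `2 ∫₀^∞ f`, where
`f z = z exp (i t z² - (1 + i) j z)` is entire. Rotate the ray of integration: the integral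
`G θ` of `f` along the ray `arg z = θ` has `G' θ = i ∫₀^∞ ∂ₓ (x e^{iθ} f (e^{iθ} x)) dx = 0`,
because throughout the sector `0 ≤ θ ≤ π/4` the factor `exp (-t sin (2θ) x² - (cos θ - sin θ) j x)`
bounding `|f (e^{iθ} x)| / x` decays, uniformly in `θ`. At `θ = π/4`, `f` becomes the
integrand of the right-hand side.
-/

open Real MeasureTheory Set Filter Topology
open Complex (I)
open scoped Complex

section Calculus

variable {E : Type*} [NormedAddCommGroup E] [NormedSpace ℝ E]

theorem eq_of_continuousOn_Icc_of_hasDerivAt_zero {f : ℝ → E} {a b : ℝ} (hab : a < b)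
    (hcont : ContinuousOn f (Icc a b)) (hderiv : ∀ x ∈ Ioo a b, HasDerivAt f 0 x) :
    f a = f b := by
  have hconst : EqOn f (fun _ ↦ f ((a + b) / 2)) (Ioo a b) := fun x hx ↦
    isOpen_Ioo.is_const_of_deriv_eq_zero isPreconnected_Ioo
      (fun y hy ↦ (hderiv y hy).differentiableAt.differentiableWithinAt)
      (fun y hy ↦ (hderiv y hy).deriv) hx ⟨by linarith, by linarith⟩
  have hIcc := hconst.of_subset_closure hcont continuousOn_const Ioo_subset_Icc_self
    (closure_Ioo hab.ne).symm.subset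
  rw [hIcc (left_mem_Icc.2 hab.le), hIcc (right_mem_Icc.2 hab.le)]

theorem integral_Ioi_of_hasDerivAt_of_integrableOn [CompleteSpace E] {f f' : ℝ → E} {a : ℝ}
    (hcont : ContinuousWithinAt f (Ici a) a) (hderiv : ∀ x ∈ Ioi a, HasDerivAt f (f' x) x)
    (f'int : IntegrableOn f' (Ioi a)) (fint : IntegrableOn f (Ioi a)) :
    ∫ x in Ioi a, f' x = -f a := by
  rw [integral_Ioi_of_hasDerivAt_of_tendsto hcont hderiv f'int
    (tendsto_zero_of_hasDerivAt_of_integrableOn_Ioi hderiv f'int fint), zero_sub]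

end Calculus

/-- The pullback of `F z dz` along the ray `z = e^{iθ} x`. -/
noncomputable def rayPullback (F : ℂ → ℂ) (θ x : ℝ) : ℂ :=
  cexp (θ * I) * F (cexp (θ * I) * x)

/-- Both `∂ₓ (x * rayPullback F θ x)` and `-I * ∂_θ (rayPullback F θ x)`: this is what turns the
angular derivative of the ray integral into a boundary term. -/
noncomputable def rayPullbackDeriv (F : ℂ → ℂ) (θ x : ℝ) : ℂ :=
  rayPullback F θ x + x * cexp (θ * I) ^ 2 * deriv F (cexp (θ * I) * x)

section RayPullback

variable {F : ℂ → ℂ} {θ x : ℝ}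

theorem norm_rayPullback : ‖rayPullback F θ x‖ = ‖F (cexp (θ * I) * x)‖ := by
  rw [rayPullback, norm_mul, Complex.norm_exp_ofReal_mul_I, one_mul]

theorem norm_rayPullbackDeriv_le :
    ‖rayPullbackDeriv F θ x‖
      ≤ ‖F (cexp (θ * I) * x)‖ + ‖(x : ℂ) * deriv F (cexp (θ * I) * x)‖ := by
  refine (norm_add_le _ _).trans_eq ?_
  rw [norm_rayPullback, mul_right_comm, norm_mul (_ * _), norm_pow,
    Complex.norm_exp_ofReal_mul_I, one_pow, mul_one]

theorem hasDerivAt_mul_rayPullback (hF : DifferentiableAt ℂ F (cexp (θ * I) * x)) :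
    HasDerivAt (fun x : ℝ ↦ x * rayPullback F θ x) (rayPullbackDeriv F θ x) x := by
  have hray : HasDerivAt (fun x : ℝ ↦ cexp (θ * I) * x) (cexp (θ * I)) x := by
    simpa using (hasDerivAt_id x).ofReal_comp.const_mul (cexp (θ * I))
  have := (hasDerivAt_id x).ofReal_comp.mul ((hF.hasDerivAt.comp x hray).const_mul (cexp (θ * I)))
  exact this.congr_deriv <| by
    simp only [rayPullbackDeriv, rayPullback, Function.comp_apply, id, Complex.ofReal_one]; ring

theorem hasDerivAt_rayPullback_angle (hF : DifferentiableAt ℂ F (cexp (θ * I) * x)) :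
    HasDerivAt (fun θ : ℝ ↦ rayPullback F θ x) (I * rayPullbackDeriv F θ x) θ := by
  have hrot : HasDerivAt (fun θ : ℝ ↦ cexp (θ * I)) (I * cexp (θ * I)) θ := by
    simpa [mul_comm] using ((hasDerivAt_id θ).ofReal_comp.mul_const I).cexp
  have := hrot.mul ((hF.hasDerivAt.comp θ (hrot.mul_const (x : ℂ))))
  exact this.congr_deriv <| by
    simp only [rayPullbackDeriv, rayPullback, Function.comp_apply]; ring

theorem continuous_rayPullback_angle (hF : Continuous F) (x : ℝ) :
    Continuous fun θ : ℝ ↦ rayPullback F θ x := by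
  unfold rayPullback; fun_prop

@[fun_prop]
theorem continuous_rayPullback (hF : Continuous F) (θ : ℝ) : Continuous (rayPullback F θ) := by
  unfold rayPullback; fun_prop

theorem continuous_rayPullbackDeriv (hF : Differentiable ℂ F) (θ : ℝ) :
    Continuous (rayPullbackDeriv F θ) := by
  have hF_cont := hF.continuous
  have hF'_cont : Continuous (deriv F) := (hF.contDiff (n := 1)).continuous_deriv le_rfl
  unfold rayPullbackDeriv; fun_prop

theorem integral_rayPullbackDeriv_eq_zero (hF : Differentiable ℂ F)
    (hD_int : IntegrableOn (rayPullbackDeriv F θ) (Ioi 0))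
    (hxF_int : IntegrableOn (fun x : ℝ ↦ x * rayPullback F θ x) (Ioi 0)) :
    ∫ x in Ioi (0 : ℝ), rayPullbackDeriv F θ x = 0 := by
  have hF_cont := hF.continuous
  rw [integral_Ioi_of_hasDerivAt_of_integrableOn (by fun_prop)
    (fun x _ ↦ hasDerivAt_mul_rayPullback (hF _)) hD_int hxF_int]
  simp

end RayPullback

section RayIntegral

variable {F : ℂ → ℂ} {bound : ℝ → ℝ} {s : Set ℝ} {θ : ℝ}

theorem ae_norm_rayPullback_le (hF_le : ∀ x ∈ Ioi (0 : ℝ), ‖F (cexp (θ * I) * x)‖ ≤ bound x) :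
    ∀ᵐ x ∂volume.restrict (Ioi 0), ‖rayPullback F θ x‖ ≤ bound x := by
  filter_upwards [ae_restrict_mem measurableSet_Ioi] with x hx
  rw [norm_rayPullback]
  exact hF_le x hx

theorem continuousOn_integral_rayPullback (hF : Continuous F)
    (hbound : IntegrableOn bound (Ioi 0))
    (hF_le : ∀ θ ∈ s, ∀ x ∈ Ioi (0 : ℝ), ‖F (cexp (θ * I) * x)‖ ≤ bound x) :
    ContinuousOn (fun θ ↦ ∫ x in Ioi (0 : ℝ), rayPullback F θ x) s :=
  continuousOn_of_dominated (fun θ _ ↦ (continuous_rayPullback hF θ).aestronglyMeasurable)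
    (fun θ hθ ↦ ae_norm_rayPullback_le (hF_le θ hθ)) hbound
    (ae_of_all _ fun x ↦ (continuous_rayPullback_angle hF x).continuousOn)

theorem hasDerivAt_integral_rayPullback (hF : Differentiable ℂ F) (hs : IsOpen s)
    (hθ : θ ∈ s) (hbound : IntegrableOn bound (Ioi 0))
    (hF_le : ∀ θ ∈ s, ∀ x ∈ Ioi (0 : ℝ), ‖F (cexp (θ * I) * x)‖ ≤ bound x)
    (hxF_le : ∀ θ ∈ s, ∀ x ∈ Ioi (0 : ℝ), ‖x * F (cexp (θ * I) * x)‖ ≤ bound x)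
    (hxF'_le : ∀ θ ∈ s, ∀ x ∈ Ioi (0 : ℝ), ‖x * deriv F (cexp (θ * I) * x)‖ ≤ bound x) :
    HasDerivAt (fun θ ↦ ∫ x in Ioi (0 : ℝ), rayPullback F θ x) 0 θ := by
  have hF_cont := hF.continuous
  have hD_le : ∀ᵐ x ∂volume.restrict (Ioi 0), ∀ θ ∈ s, ‖rayPullbackDeriv F θ x‖ ≤ 2 * bound x := by
    filter_upwards [ae_restrict_mem measurableSet_Ioi] with x hx θ hθ
    linarith [norm_rayPullbackDeriv_le (F := F) (θ := θ) (x := x), hF_le θ hθ x hx,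
      hxF_le θ hθ x hx, hxF'_le θ hθ x hx]
  have hD_int : IntegrableOn (rayPullbackDeriv F θ) (Ioi 0) :=
    (hbound.const_mul 2).mono' (continuous_rayPullbackDeriv hF θ).aestronglyMeasurable
      (by filter_upwards [hD_le] with x hx using hx θ hθ)
  have hxF_int : IntegrableOn (fun x : ℝ ↦ x * rayPullback F θ x) (Ioi 0) := by
    refine hbound.mono' (by fun_prop) ?_
    filter_upwards [ae_restrict_mem measurableSet_Ioi] with x hx
    rw [norm_mul, norm_rayPullback, ← norm_mul]
    exact hxF_le θ hθ x hx
  have hG := (hasDerivAt_integral_of_dominated_loc_of_deriv_le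
    (F' := fun θ x ↦ I * rayPullbackDeriv F θ x) (bound := fun x ↦ 2 * bound x) (hs.mem_nhds hθ)
    (Eventually.of_forall fun θ ↦ (continuous_rayPullback hF_cont θ).aestronglyMeasurable)
    (hbound.mono' (continuous_rayPullback hF_cont θ).aestronglyMeasurable
      (ae_norm_rayPullback_le (hF_le θ hθ)))
    (continuous_const.mul (continuous_rayPullbackDeriv hF θ)).aestronglyMeasurable
    (by filter_upwards [hD_le] with x hx θ hθ; simpa using hx θ hθ) (hbound.const_mul 2)
    (ae_of_all _ fun x θ _ ↦ hasDerivAt_rayPullback_angle (hF _))).2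
  rwa [integral_const_mul, integral_rayPullbackDeriv_eq_zero hF hD_int hxF_int, mul_zero] at hG

theorem integral_Ioi_eq_integral_Ioi_rayPullback (hF : Differentiable ℂ F) {α : ℝ}
    (hα : 0 < α) (hbound : IntegrableOn bound (Ioi 0))
    (hF_le : ∀ θ ∈ Icc 0 α, ∀ x ∈ Ioi (0 : ℝ), ‖F (cexp (θ * I) * x)‖ ≤ bound x)
    (hxF_le : ∀ θ ∈ Ioo 0 α, ∀ x ∈ Ioi (0 : ℝ), ‖x * F (cexp (θ * I) * x)‖ ≤ bound x)
    (hxF'_le : ∀ θ ∈ Ioo 0 α, ∀ x ∈ Ioi (0 : ℝ), ‖x * deriv F (cexp (θ * I) * x)‖ ≤ bound x) :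
    ∫ x in Ioi (0 : ℝ), F x = ∫ x in Ioi (0 : ℝ), rayPullback F α x := by
  have h := eq_of_continuousOn_Icc_of_hasDerivAt_zero hα
    (continuousOn_integral_rayPullback hF.continuous hbound hF_le)
    (fun θ hθ ↦ hasDerivAt_integral_rayPullback hF isOpen_Ioo hθ hbound
      (fun θ hθ ↦ hF_le θ (Ioo_subset_Icc_self hθ)) hxF_le hxF'_le)
  simpa only [rayPullback, Complex.ofReal_zero, zero_mul, Complex.exp_zero, one_mul] using h

end RayIntegral

theorem integrableOn_pow_mul_exp_neg_mul_pow (n : ℕ) {k : ℕ} (hk : 0 < k) {b : ℝ} (hb : 0 < b) :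
    IntegrableOn (fun x : ℝ ↦ x ^ n * rexp (-b * x ^ k)) (Ioi 0) := by
  have h := integrableOn_rpow_mul_exp_neg_mul_rpow (s := n) (p := k)
    (by linarith [n.cast_nonneg (α := ℝ)]) (by exact_mod_cast hk) hb
  simpa only [rpow_natCast] using h

theorem integral_Ioi_comp_sq {E : Type*} [NormedAddCommGroup E] [NormedSpace ℝ E] (g : ℝ → E) :
    ∫ x in Ioi (0 : ℝ), (2 * x) • g (x ^ 2) = ∫ y in Ioi (0 : ℝ), g y := by
  have h := integral_comp_rpow_Ioi_of_pos (g := g) two_pos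
  norm_num at h
  simpa only [← rpow_natCast, Nat.cast_ofNat] using h

section Trigonometry

variable {θ : ℝ}

theorem sin_le_cos_of_nonneg_of_le_pi_div_four (h₀ : 0 ≤ θ) (h₁ : θ ≤ π / 4) : sin θ ≤ cos θ := by
  have hsin : sin θ ≤ sin (π / 4) :=
    sin_le_sin_of_le_of_le_pi_div_two (by linarith [pi_pos]) (by linarith [pi_pos]) h₁
  have hcos : cos (π / 4) ≤ cos θ := cos_le_cos_of_nonneg_of_le_pi h₀ (by linarith [pi_pos]) h₁
  rw [sin_pi_div_four] at hsin
  rw [cos_pi_div_four] at hcos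
  linarith

/-- `(cos θ - sin θ) ^ 2 + sin (2 θ) = 1`, and on `[0, π/4]` both terms lie in `[0, 1]`. -/
theorem half_le_cos_sub_sin_or_half_le_two_mul_sin_mul_cos (h₀ : 0 ≤ θ) (h₁ : θ ≤ π / 4) :
    1 / 2 ≤ cos θ - sin θ ∨ 1 / 2 ≤ 2 * sin θ * cos θ := by
  have hsin : 0 ≤ sin θ := sin_nonneg_of_nonneg_of_le_pi h₀ (by linarith [pi_pos])
  have hle := sin_le_cos_of_nonneg_of_le_pi_div_four h₀ h₁
  by_contra! h
  nlinarith [sin_sq_add_cos_sq θ, cos_le_one θ]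

theorem exp_pi_div_four_mul_I_sq : cexp (↑(π / 4) * I) ^ 2 = I := by
  rw [← Complex.exp_nat_mul]
  convert Complex.exp_pi_div_two_mul_I using 2
  push_cast
  ring

theorem sqrt_two_mul_exp_pi_div_four_mul_I : (√2 : ℂ) * cexp (↑(π / 4) * I) = 1 + I := by
  have h2 : (√2 : ℂ) ^ 2 = 2 := by norm_cast; exact sq_sqrt zero_le_two
  rw [Complex.exp_mul_I, ← Complex.ofReal_cos, ← Complex.ofReal_sin, cos_pi_div_four,
    sin_pi_div_four]
  push_cast
  linear_combination (1 + I) / 2 * h2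

theorem norm_exp_mul_I_mul_ofReal (θ : ℝ) {x : ℝ} (hx : 0 ≤ x) : ‖cexp (θ * I) * x‖ = x := by
  rw [norm_mul, Complex.norm_exp_ofReal_mul_I, one_mul, Complex.norm_real, norm_of_nonneg hx]

end Trigonometry

/-- The left-hand side is `2 ∫ x in Ioi 0, chirpIntegrand t j x`, by the substitution `ω = x ^ 2`
and `√2 e^{iπ/4} = 1 + i`. -/
noncomputable def chirpIntegrand (t j : ℝ) (z : ℂ) : ℂ :=
  z * cexp (I * t * z ^ 2 - (1 + I) * j * z)

noncomputable def chirpBound (t j x : ℝ) : ℝ :=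
  (1 + 2 * t + 2 * j) * (x + x ^ 2 + x ^ 3) * (rexp (-(j / 2) * x) + rexp (-(t / 2) * x ^ 2))

theorem integrableOn_chirpBound {t j : ℝ} (ht : 0 < t) (hj : 0 < j) :
    IntegrableOn (chirpBound t j) (Ioi 0) := by
  have hexp : ∀ n, IntegrableOn (fun x : ℝ ↦ x ^ n * rexp (-(j / 2) * x ^ 1)
      + x ^ n * rexp (-(t / 2) * x ^ 2)) (Ioi 0) := fun n ↦
    (integrableOn_pow_mul_exp_neg_mul_pow n one_pos (half_pos hj)).add
      (integrableOn_pow_mul_exp_neg_mul_pow n two_pos (half_pos ht))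
  refine IntegrableOn.congr_fun ((((hexp 1).add (hexp 2)).add (hexp 3)).const_mul
    (1 + 2 * t + 2 * j)) (fun x _ ↦ ?_) measurableSet_Ioi
  simp only [chirpBound, Pi.add_apply, pow_one]
  ring

theorem hasDerivAt_chirpIntegrand (t j : ℝ) (z : ℂ) :
    HasDerivAt (chirpIntegrand t j)
      (cexp (I * t * z ^ 2 - (1 + I) * j * z) * (1 + z * (2 * I * t * z - (1 + I) * j))) z := by
  have h : HasDerivAt (fun z : ℂ ↦ I * t * z ^ 2 - (1 + I) * j * z)
      (2 * I * t * z - (1 + I) * j) z := by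
    have := ((hasDerivAt_pow 2 z).const_mul (I * t)).sub
      ((hasDerivAt_id z).const_mul ((1 + I) * j))
    exact this.congr_deriv (by norm_num; ring)
  exact ((hasDerivAt_id z).mul h.cexp).congr_deriv (by simp only [id]; ring)

theorem re_chirpExponent_ray (t j θ x : ℝ) :
    (I * t * (cexp (θ * I) * x) ^ 2 - (1 + I) * j * (cexp (θ * I) * x)).re
      = -(t * (2 * sin θ * cos θ)) * x ^ 2 - (cos θ - sin θ) * j * x := by
  rw [Complex.exp_mul_I, ← Complex.ofReal_cos, ← Complex.ofReal_sin]
  simp only [Complex.sub_re, Complex.mul_re, Complex.add_re, Complex.mul_im, Complex.add_im,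
    pow_two, Complex.I_re, Complex.I_im, Complex.one_re, Complex.one_im, Complex.ofReal_re,
    Complex.ofReal_im]
  ring

theorem rayPullback_chirpIntegrand_pi_div_four (t j x : ℝ) :
    rayPullback (chirpIntegrand t j) (π / 4) x
      = I * (x * cexp (-t * x ^ 2 - I * √2 * j * x)) := by
  have hsq := exp_pi_div_four_mul_I_sq
  have hlin : (1 + I) * cexp (↑(π / 4) * I) = √2 * I := by
    rw [← sqrt_two_mul_exp_pi_div_four_mul_I, mul_assoc, ← sq, hsq]
  simp only [rayPullback, chirpIntegrand]
  rw [mul_pow, hsq, show (1 + I) * (j : ℂ) * (cexp (↑(π / 4) * I) * x)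
    = (1 + I) * cexp (↑(π / 4) * I) * j * x by ring, hlin]
  have hexponent : I * t * (I * x ^ 2) - √2 * I * j * x = -t * x ^ 2 - I * √2 * j * x := by
    linear_combination (t : ℂ) * x ^ 2 * Complex.I_sq
  rw [hexponent]
  linear_combination x * cexp (-t * x ^ 2 - I * √2 * j * x) * hsq

section SectorBounds

variable {t j θ x : ℝ} (ht : 0 ≤ t) (hj : 0 ≤ j) (hθ : θ ∈ Icc 0 (π / 4)) (hx : 0 ≤ x)
include ht hj hθ hx

theorem norm_exp_chirpExponent_ray_le :
    ‖cexp (I * t * (cexp (θ * I) * x) ^ 2 - (1 + I) * j * (cexp (θ * I) * x))‖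
      ≤ rexp (-(j / 2) * x) + rexp (-(t / 2) * x ^ 2) := by
  rw [Complex.norm_exp, re_chirpExponent_ray]
  have hsin : 0 ≤ sin θ := sin_nonneg_of_nonneg_of_le_pi hθ.1 (by linarith [hθ.2, pi_pos])
  have hcos_sub_sin : 0 ≤ cos θ - sin θ :=
    sub_nonneg.2 (sin_le_cos_of_nonneg_of_le_pi_div_four hθ.1 hθ.2)
  have hsin_cos : 0 ≤ 2 * sin θ * cos θ := by nlinarith
  rcases half_le_cos_sub_sin_or_half_le_two_mul_sin_mul_cos hθ.1 hθ.2 with h | h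
  · refine le_add_of_le_of_nonneg (exp_le_exp.2 ?_) (exp_pos _).le
    nlinarith [mul_nonneg (mul_nonneg ht hsin_cos) (sq_nonneg x), mul_nonneg hj hx]
  · refine le_add_of_nonneg_of_le (exp_pos _).le (exp_le_exp.2 ?_)
    nlinarith [mul_nonneg (mul_nonneg hcos_sub_sin hj) hx, mul_nonneg ht (sq_nonneg x)]

theorem mul_norm_exp_chirpExponent_ray_le_chirpBound {p : ℝ}
    (hp : p ≤ (1 + 2 * t + 2 * j) * (x + x ^ 2 + x ^ 3)) :
    p * ‖cexp (I * t * (cexp (θ * I) * x) ^ 2 - (1 + I) * j * (cexp (θ * I) * x))‖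
      ≤ chirpBound t j x :=
  mul_le_mul hp (norm_exp_chirpExponent_ray_le ht hj hθ hx) (norm_nonneg _) (by positivity)

theorem norm_chirpIntegrand_ray_le :
    ‖chirpIntegrand t j (cexp (θ * I) * x)‖ ≤ chirpBound t j x := by
  rw [chirpIntegrand, norm_mul, norm_exp_mul_I_mul_ofReal θ hx]
  exact mul_norm_exp_chirpExponent_ray_le_chirpBound ht hj hθ hx (by nlinarith [pow_nonneg hx 3])

theorem norm_mul_chirpIntegrand_ray_le :
    ‖(x : ℂ) * chirpIntegrand t j (cexp (θ * I) * x)‖ ≤ chirpBound t j x := by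
  rw [chirpIntegrand, ← mul_assoc, norm_mul, norm_mul, norm_exp_mul_I_mul_ofReal θ hx,
    Complex.norm_real, norm_of_nonneg hx, ← sq]
  exact mul_norm_exp_chirpExponent_ray_le_chirpBound ht hj hθ hx (by nlinarith [pow_nonneg hx 3])

theorem norm_mul_deriv_chirpIntegrand_ray_le :
    ‖(x : ℂ) * deriv (chirpIntegrand t j) (cexp (θ * I) * x)‖ ≤ chirpBound t j x := by
  set z := cexp (θ * I) * x
  have hz : ‖z‖ = x := norm_exp_mul_I_mul_ofReal θ hx
  have h1I : ‖1 + I‖ ≤ 2 := (norm_add_le _ _).trans (by simp; norm_num)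
  have hfactor : ‖1 + z * (2 * I * t * z - (1 + I) * j)‖ ≤ 1 + x * (2 * t * x + 2 * j) := by
    refine (norm_add_le _ _).trans ?_
    rw [norm_one, norm_mul, hz]
    gcongr
    refine (norm_sub_le _ _).trans ?_
    simp only [norm_mul, Complex.norm_ofNat, Complex.norm_I, Complex.norm_real, hz,
      norm_of_nonneg ht, norm_of_nonneg hj]
    nlinarith
  rw [(hasDerivAt_chirpIntegrand t j z).deriv, norm_mul, norm_mul, Complex.norm_real,
    norm_of_nonneg hx, mul_comm ‖cexp _‖, ← mul_assoc]
  refine (mul_le_mul_of_nonneg_right (mul_le_mul_of_nonneg_left hfactor hx)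
    (norm_nonneg _)).trans ?_
  exact mul_norm_exp_chirpExponent_ray_le_chirpBound ht hj hθ hx (by nlinarith [pow_nonneg hx 3])

end SectorBounds

theorem stmt_15 (t j : ℝ) (ht : 0 < t) (hj : 0 < j) :
    ∫ ω in Set.Ioi (0:ℝ),
        Complex.exp (Complex.I * ω * t -
          (Real.sqrt 2 : ℂ) * Complex.exp (Complex.I * π / 4) * (Real.sqrt ω : ℂ) * j)
    = 2 * Complex.I *
        ∫ x in Set.Ioi (0:ℝ),
          (x : ℂ) * Complex.exp (-(t : ℂ) * x ^ 2 - Complex.I * (Real.sqrt 2 : ℂ) * j * x) := by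
  have hsubst : EqOn (fun x : ℝ ↦ (2 * x) • cexp (I * ↑(x ^ 2) * t
      - (√2 : ℂ) * cexp (I * π / 4) * (√(x ^ 2) : ℂ) * j)) (fun x ↦ 2 * chirpIntegrand t j x)
      (Ioi 0) := by
    intro x hx
    dsimp only
    rw [sqrt_sq (le_of_lt hx), show I * π / 4 = ↑(π / 4) * I by push_cast; ring,
      sqrt_two_mul_exp_pi_div_four_mul_I, chirpIntegrand, Complex.real_smul]
    push_cast
    ring_nf
  have hrotate := integral_Ioi_eq_integral_Ioi_rayPullback
    (fun z ↦ (hasDerivAt_chirpIntegrand t j z).differentiableAt) (by positivity : 0 < π / 4)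
    (integrableOn_chirpBound ht hj)
    (fun θ hθ x hx ↦ norm_chirpIntegrand_ray_le ht.le hj.le hθ (le_of_lt hx))
    (fun θ hθ x hx ↦
      norm_mul_chirpIntegrand_ray_le ht.le hj.le (Ioo_subset_Icc_self hθ) (le_of_lt hx))
    (fun θ hθ x hx ↦
      norm_mul_deriv_chirpIntegrand_ray_le ht.le hj.le (Ioo_subset_Icc_self hθ) (le_of_lt hx))
  rw [← integral_Ioi_comp_sq, setIntegral_congr_fun measurableSet_Ioi hsubst, integral_const_mul,
    hrotate]
  simp_rw [rayPullback_chirpIntegrand_pi_div_four, integral_const_mul]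
  ring
end

section
/- For every real t > 0 and every real j ≥ 0, ∫₀^{t} s^{−1/2} · exp( −j²/(2s) ) ds = 2√t · exp( −j²/(2t) ) − 2j · ∫_{j/√t}^{∞} exp(−u²/2) du. -/
/-!
With `G x = ∫_x^∞ e^{-u²/2} du`, the function `F s = 2√s e^{-j²/(2s)} - 2j G(j/√s)` is an
antiderivative of `s^{-1/2} e^{-j²/(2s)}` on `(0, ∞)`: the two terms `j² s^{-3/2} e^{-j²/(2s)}`
produced by differentiating cancel. As `s → 0⁺`, `√s → 0` and `j/√s → ∞` (or `j = 0`), so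
`F s → 0`, and the fundamental theorem of calculus with a limit at the left endpoint gives
`∫_0^t = F t`.
-/

open Real MeasureTheory Set Filter Topology

theorem hasDerivAt_integral_Ioi {E : Type*} [NormedAddCommGroup E] [NormedSpace ℝ E]
    [CompleteSpace E] {f : ℝ → E} (hf : Integrable f) (hc : Continuous f) (x : ℝ) :
    HasDerivAt (fun a => ∫ u in Ioi a, f u) (-f x) x := by
  have hsplit : (fun a => ∫ u in Ioi a, f u) =
      fun a => (∫ u in Ioi 0, f u) - ∫ u in (0 : ℝ)..a, f u :=
    funext fun a => by
      rw [← intervalIntegral.integral_Ioi_sub_Ioi' hf.integrableOn hf.integrableOn, sub_sub_cancel]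
  rw [hsplit]
  exact (intervalIntegral.integral_hasDerivAt_right (hc.intervalIntegrable _ _)
    hc.aestronglyMeasurable.stronglyMeasurableAtFilter hc.continuousAt).const_sub _

theorem integrable_exp_neg_sq_div_two : Integrable fun u : ℝ => exp (-u ^ 2 / 2) := by
  simpa [neg_div, div_eq_inv_mul] using integrable_exp_neg_mul_sq (by norm_num : (0 : ℝ) < 2⁻¹)

noncomputable def gaussianTail (x : ℝ) : ℝ := ∫ u in Ioi x, exp (-u ^ 2 / 2)

theorem hasDerivAt_gaussianTail (x : ℝ) : HasDerivAt gaussianTail (-exp (-x ^ 2 / 2)) x :=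
  hasDerivAt_integral_Ioi integrable_exp_neg_sq_div_two (by fun_prop) x

theorem tendsto_gaussianTail_atTop : Tendsto gaussianTail atTop (𝓝 0) :=
  tendsto_integral_Ioi_zero tendsto_id

theorem tendsto_div_sqrt_nhdsGT_zero {j : ℝ} (hj : 0 < j) :
    Tendsto (fun s => j / √s) (𝓝[>] 0) atTop := by
  have hsqrt : Tendsto (fun s : ℝ => √s) (𝓝[>] 0) (𝓝[>] 0) :=
    tendsto_nhdsWithin_iff.2
      ⟨by simpa using continuous_sqrt.continuousWithinAt.tendsto (s := Ioi 0) (x := 0),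
        eventually_mem_nhdsWithin.mono fun s hs => sqrt_pos.2 hs⟩
  simpa [div_eq_mul_inv] using (tendsto_inv_nhdsGT_zero.comp hsqrt).const_mul_atTop hj

theorem exp_neg_sq_div_le_one (j : ℝ) {s : ℝ} (hs : 0 ≤ s) : exp (-j ^ 2 / (2 * s)) ≤ 1 :=
  exp_le_one_iff.2 (div_nonpos_of_nonpos_of_nonneg (neg_nonpos.2 (sq_nonneg j)) (by positivity))

theorem intervalIntegrable_inv_sqrt_mul_exp (j a b : ℝ) :
    IntervalIntegrable (fun s => (√s)⁻¹ * exp (-j ^ 2 / (2 * s))) volume a b := by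
  refine (intervalIntegral.intervalIntegrable_rpow' (r := -(1 / 2)) (by norm_num)).mono_fun
    (by fun_prop) (ae_of_all _ fun s => ?_)
  rcases le_or_gt s 0 with hs | hs
  · simp [sqrt_eq_zero'.2 hs]
  dsimp only
  rw [norm_of_nonneg (by positivity), norm_of_nonneg (by positivity), rpow_neg hs.le,
    ← sqrt_eq_rpow]
  exact mul_le_of_le_one_right (by positivity) (exp_neg_sq_div_le_one j hs.le)

noncomputable def heatPrimitive (j s : ℝ) : ℝ :=
  2 * √s * exp (-j ^ 2 / (2 * s)) - 2 * j * gaussianTail (j / √s)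

theorem hasDerivAt_heatPrimitive (j : ℝ) {s : ℝ} (hs : 0 < s) :
    HasDerivAt (heatPrimitive j) ((√s)⁻¹ * exp (-j ^ 2 / (2 * s))) s := by
  have hsqrt : HasDerivAt (fun s => √s) (1 / (2 * √s)) s := hasDerivAt_sqrt hs.ne'
  have hsqrt_ne : √s ≠ 0 := (sqrt_pos.2 hs).ne'
  have hsq : √s ^ 2 = s := sq_sqrt hs.le
  have hexp := ((hasDerivAt_const s (-j ^ 2)).fun_div ((hasDerivAt_id' s).const_mul 2)
    (by positivity)).exp
  have htail := (hasDerivAt_gaussianTail (j / √s)).comp s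
    ((hasDerivAt_const s j).fun_div hsqrt hsqrt_ne)
  have hexp_eq : -(j / √s) ^ 2 / 2 = -j ^ 2 / (2 * s) := by
    rw [div_pow, hsq]; ring
  refine (((hsqrt.const_mul 2).mul hexp).sub (htail.const_mul (2 * j))).congr_deriv ?_
  rw [hexp_eq]
  field_simp
  rw [hsq]
  ring

theorem tendsto_heatPrimitive_nhdsGT_zero {j : ℝ} (hj : 0 ≤ j) :
    Tendsto (heatPrimitive j) (𝓝[>] 0) (𝓝 0) := by
  have hsqrt : Tendsto (fun s : ℝ => 2 * √s) (𝓝[>] 0) (𝓝 0) := by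
    simpa using (continuous_sqrt.tendsto 0).const_mul 2 |>.mono_left nhdsWithin_le_nhds
  have hfront : Tendsto (fun s => 2 * √s * exp (-j ^ 2 / (2 * s))) (𝓝[>] 0) (𝓝 0) := by
    refine hsqrt.zero_mul_isBoundedUnder_le (isBoundedUnder_of_eventually_le (a := 1) ?_)
    filter_upwards [self_mem_nhdsWithin] with s hs
    rw [Function.comp_apply, norm_of_nonneg (exp_pos _).le]
    exact exp_neg_sq_div_le_one j (le_of_lt hs)
  have htail : Tendsto (fun s => 2 * j * gaussianTail (j / √s)) (𝓝[>] 0) (𝓝 0) := by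
    rcases hj.eq_or_lt with rfl | hj
    · simp
    · simpa using
        (tendsto_gaussianTail_atTop.comp (tendsto_div_sqrt_nhdsGT_zero hj)).const_mul (2 * j)
  unfold heatPrimitive
  simpa only [sub_zero] using hfront.sub htail

theorem stmt_16 (t j : ℝ) (ht : 0 < t) (hj : 0 ≤ j) :
    ∫ s in (0:ℝ)..t, (Real.sqrt s)⁻¹ * Real.exp (-j ^ 2 / (2 * s))
    = 2 * Real.sqrt t * Real.exp (-j ^ 2 / (2 * t)) -
        2 * j * ∫ u in Set.Ioi (j / Real.sqrt t), Real.exp (-u ^ 2 / 2) := by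
  have hleft := tendsto_heatPrimitive_nhdsGT_zero hj
  have hright : Tendsto (heatPrimitive j) (𝓝[<] t) (𝓝 (heatPrimitive j t)) :=
    (hasDerivAt_heatPrimitive j ht).continuousAt.tendsto.mono_left nhdsWithin_le_nhds
  rw [intervalIntegral.integral_eq_sub_of_hasDerivAt_of_tendsto ht
    (fun s hs => hasDerivAt_heatPrimitive j hs.1) (intervalIntegrable_inv_sqrt_mul_exp j 0 t)
    hleft hright, sub_zero]
  rfl
end

section
/- Let T and L be positive natural numbers and let h : (ℤ/Tℤ) × (ℤ/Lℤ) → ℝ. Define the discrete Fourier transform ĥ(ν, k) := (1/√(LT)) Σ_{t=0}^{T−1} Σ_{j=0}^{L−1} exp( 2πi·kj/L + 2πi·νt/T ) · h(t, j). Then Σ_{t=0}^{T−1} Σ_{j=0}^{L−1} ( h(t, j) − (1/2)·h(t−1, j−1) − (1/2)·h(t−1, j+1) )² = Σ_{ν=0}^{T−1} Σ_{k=0}^{L−1} |ĥ(ν, k)|² · ( 1 − 2·cos(2πν/T)·cos(2πk/L) + cos²(2πk/L) ). -/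
/-!
Put `g p := h p - ½ h (p - (1, 1)) - ½ h (p - (1, -1))` on the ring `R = ℤ/T × ℤ/L`, so that the
left side is `∑ g²`. The paper's `ĥ` is `(LT)^{-1/2}` times the transform
`f ↦ (w ↦ ∑ p, ψ (w * p) * f p)` for the primitive additive character
`ψ (t, j) = e^{2πit/T} e^{2πij/L}` of `R`. This transform turns a shift by `a` into
multiplication by `ψ (w * a)`, so `ĝ(ν, k) = (1 - e^{2πiν/T} cos (2πk/L)) ĥ(ν, k)`, and
`|1 - e^{iθ} cos φ|² = 1 - 2 cos θ cos φ + cos² φ`. Plancherel for the transform, which follows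
from orthogonality of the characters `p ↦ ψ (w * p)`, then gives the identity.
-/

open Real Complex Finset
open scoped ComplexConjugate

namespace AddChar

section Coprod

variable {R₁ R₂ M : Type*} [AddMonoid R₁] [AddMonoid R₂] [CommMonoid M]

def coprod (ψ₁ : AddChar R₁ M) (ψ₂ : AddChar R₂ M) : AddChar (R₁ × R₂) M :=
  ψ₁.compAddMonoidHom (AddMonoidHom.fst R₁ R₂) * ψ₂.compAddMonoidHom (AddMonoidHom.snd R₁ R₂)

@[simp]
lemma coprod_apply (ψ₁ : AddChar R₁ M) (ψ₂ : AddChar R₂ M) (p : R₁ × R₂) :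
    ψ₁.coprod ψ₂ p = ψ₁ p.1 * ψ₂ p.2 :=
  rfl

end Coprod

lemma IsPrimitive.coprod {R₁ R₂ M : Type*} [CommRing R₁] [CommRing R₂] [CommMonoid M]
    {ψ₁ : AddChar R₁ M} {ψ₂ : AddChar R₂ M} (hψ₁ : ψ₁.IsPrimitive) (hψ₂ : ψ₂.IsPrimitive) :
    (ψ₁.coprod ψ₂).IsPrimitive := by
  rintro ⟨a₁, a₂⟩ ha
  rw [ne_one_iff]
  by_cases h₁ : a₁ = 0
  · obtain ⟨x, hx⟩ := ne_one_iff.1 (hψ₂ (a := a₂) fun h₂ ↦ ha (by simp [h₁, h₂]))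
    exact ⟨(0, x), by simpa using hx⟩
  · obtain ⟨x, hx⟩ := ne_one_iff.1 (hψ₁ h₁)
    exact ⟨(x, 0), by simpa using hx⟩

variable {R : Type*} [CommRing R] [Fintype R]

noncomputable def dft (ψ : AddChar R ℂ) (f : R → ℂ) (w : R) : ℂ :=
  ∑ p, ψ (w * p) * f p

section Linearity

variable (ψ : AddChar R ℂ)

lemma dft_sub (f g : R → ℂ) (w : R) :
    ψ.dft (fun p ↦ f p - g p) w = ψ.dft f w - ψ.dft g w := by
  simp only [dft, mul_sub, sum_sub_distrib]

lemma dft_const_mul (c : ℂ) (f : R → ℂ) (w : R) :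
    ψ.dft (fun p ↦ c * f p) w = c * ψ.dft f w := by
  simp only [dft, mul_sum, mul_left_comm]

lemma dft_comp_sub_right (f : R → ℂ) (a w : R) :
    ψ.dft (fun p ↦ f (p - a)) w = ψ (w * a) * ψ.dft f w := by
  rw [dft, ← Equiv.sum_comp (Equiv.addRight a), dft, mul_sum]
  refine sum_congr rfl fun p _ ↦ ?_
  simp only [Equiv.coe_addRight, add_sub_cancel_right, mul_add, map_add_eq_mul]
  ring

end Linearity

theorem sum_norm_dft_sq [DecidableEq R] {ψ : AddChar R ℂ} (hψ : ψ.IsPrimitive) (f : R → ℂ) :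
    ∑ w, ‖ψ.dft f w‖ ^ 2 = Fintype.card R * ∑ p, ‖f p‖ ^ 2 := by
  have orthogonality (p q : R) : ∑ w, ψ (w * p) * conj (ψ (w * q)) =
      if p = q then (Fintype.card R : ℂ) else 0 := by
    simp_rw [← map_neg_eq_conj, ← map_add_eq_mul, ← mul_neg, ← mul_add, ← sub_eq_add_neg,
      sum_mulShift _ hψ, sub_eq_zero]
    split_ifs <;> simp
  apply Complex.ofReal_injective
  push_cast
  simp_rw [← Complex.mul_conj', dft, map_sum, map_mul, sum_mul_sum]
  calc ∑ w, ∑ p, ∑ q, ψ (w * p) * f p * (conj (ψ (w * q)) * conj (f q))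
      = ∑ p, ∑ q, (∑ w, ψ (w * p) * conj (ψ (w * q))) * (f p * conj (f q)) := by
        rw [sum_comm]
        refine sum_congr rfl fun p _ ↦ ?_
        rw [sum_comm]
        refine sum_congr rfl fun q _ ↦ ?_
        rw [sum_mul]
        refine sum_congr rfl fun w _ ↦ ?_
        ring
    _ = Fintype.card R * ∑ p, f p * conj (f p) := by
        simp_rw [orthogonality, ite_mul, zero_mul, sum_ite_eq, mem_univ, if_true, mul_sum]

end AddChar

namespace ZMod

variable {N : ℕ} [NeZero N]

lemma sum_range_natCast {M : Type*} [AddCommMonoid M] (f : ZMod N → M) :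
    ∑ n ∈ range N, f n = ∑ x, f x :=
  sum_nbij' (↑) ZMod.val (fun _ _ ↦ mem_univ _) (fun x _ ↦ mem_range.2 x.val_lt)
    (fun _ hn ↦ val_natCast_of_lt (mem_range.1 hn)) (fun x _ ↦ natCast_zmod_val x)
    (fun _ _ ↦ rfl)

end ZMod

lemma sum_range_sum_range_natCast {T L : ℕ} [NeZero T] [NeZero L] {M : Type*} [AddCommMonoid M]
    (f : ZMod T × ZMod L → M) :
    ∑ t ∈ range T, ∑ j ∈ range L, f (t, j) = ∑ p, f p := by
  rw [Fintype.sum_prod_type, ← ZMod.sum_range_natCast]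
  exact sum_congr rfl fun t _ ↦ ZMod.sum_range_natCast (fun j ↦ f (t, j))

lemma norm_one_sub_exp_mul_cos_sq (θ φ : ℝ) :
    ‖1 - exp (θ * I) * (Real.cos φ : ℂ)‖ ^ 2 =
      1 - 2 * Real.cos θ * Real.cos φ + Real.cos φ ^ 2 := by
  rw [Complex.sq_norm, Complex.normSq_apply]
  simp only [sub_re, sub_im, mul_re, mul_im, one_re, one_im, exp_ofReal_mul_I_re,
    exp_ofReal_mul_I_im, ofReal_re, ofReal_im]
  linear_combination Real.cos φ ^ 2 * Real.sin_sq_add_cos_sq θ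

section Torus

variable {T L : ℕ} [NeZero T] [NeZero L]

open AddChar

lemma coprod_stdAddChar_intCast (a b : ℤ) :
    (ZMod.stdAddChar.coprod ZMod.stdAddChar : AddChar (ZMod T × ZMod L) ℂ)
        ((a : ZMod T), (b : ZMod L)) =
      exp (2 * π * I * a / T) * exp (2 * π * I * b / L) := by
  rw [coprod_apply, ZMod.stdAddChar_coe, ZMod.stdAddChar_coe]

lemma sum_range_exp_mul_eq_dft (f : ZMod T × ZMod L → ℂ) (ν k : ℕ) :
    ∑ t ∈ range T, ∑ j ∈ range L,
        exp (2 * π * I * k * j / L + 2 * π * I * ν * t / T) * f (t, j) =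
      (ZMod.stdAddChar.coprod ZMod.stdAddChar).dft f ((ν : ZMod T), (k : ZMod L)) := by
  rw [dft, ← sum_range_sum_range_natCast]
  refine sum_congr rfl fun t _ ↦ sum_congr rfl fun j _ ↦ ?_
  have : ((ν : ZMod T), (k : ZMod L)) * ((t : ZMod T), (j : ZMod L)) =
      ((((ν * t : ℕ) : ℤ) : ZMod T), (((k * j : ℕ) : ℤ) : ZMod L)) := by
    simp
  rw [this, coprod_stdAddChar_intCast, ← Complex.exp_add]
  push_cast
  ring_nf

lemma norm_one_sub_half_coprod_stdAddChar_sq (ν k : ℕ) :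
    ‖1 - 1 / 2 * (ZMod.stdAddChar.coprod ZMod.stdAddChar : AddChar (ZMod T × ZMod L) ℂ)
          (((ν : ZMod T), (k : ZMod L)) * (1, 1)) -
        1 / 2 * (ZMod.stdAddChar.coprod ZMod.stdAddChar : AddChar (ZMod T × ZMod L) ℂ)
          (((ν : ZMod T), (k : ZMod L)) * (1, -1))‖ ^ 2 =
      1 - 2 * Real.cos (2 * π * ν / T) * Real.cos (2 * π * k / L) +
        Real.cos (2 * π * k / L) ^ 2 := by
  have h₁ : ((ν : ZMod T), (k : ZMod L)) * (1, 1) = (((ν : ℤ) : ZMod T), ((k : ℤ) : ZMod L)) := by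
    simp
  have h₂ : ((ν : ZMod T), (k : ZMod L)) * (1, -1) =
      (((ν : ℤ) : ZMod T), ((-k : ℤ) : ZMod L)) := by
    simp
  rw [h₁, h₂, coprod_stdAddChar_intCast, coprod_stdAddChar_intCast,
    ← norm_one_sub_exp_mul_cos_sq, ofReal_cos, Complex.cos]
  push_cast
  ring_nf

end Torus

lemma norm_one_div_ofReal_sqrt_sq {x : ℝ} (hx : 0 ≤ x) : ‖1 / (√x : ℂ)‖ ^ 2 = x⁻¹ := by
  rw [norm_div, norm_one, norm_real, norm_of_nonneg (Real.sqrt_nonneg _), div_pow,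
    Real.sq_sqrt hx, one_pow, one_div]

theorem stmt_19 (T L : ℕ) (hT : 0 < T) (hL : 0 < L) (h : ZMod T × ZMod L → ℝ) :
    ∑ t ∈ Finset.range T, ∑ j ∈ Finset.range L,
        (h ((t : ZMod T), (j : ZMod L)) -
          (1 / 2) * h ((t : ZMod T) - 1, (j : ZMod L) - 1) -
          (1 / 2) * h ((t : ZMod T) - 1, (j : ZMod L) + 1)) ^ 2
    = ∑ ν ∈ Finset.range T, ∑ k ∈ Finset.range L,
        ‖(1 / (Real.sqrt (L * T) : ℂ)) *
            ∑ t ∈ Finset.range T, ∑ j ∈ Finset.range L,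
              Complex.exp (2 * π * Complex.I * k * j / L + 2 * π * Complex.I * ν * t / T) *
                (h ((t : ZMod T), (j : ZMod L)) : ℂ)‖ ^ 2 *
          (1 - 2 * Real.cos (2 * π * ν / T) * Real.cos (2 * π * k / L) +
            Real.cos (2 * π * k / L) ^ 2) := by
  have : NeZero T := ⟨hT.ne'⟩
  have : NeZero L := ⟨hL.ne'⟩
  set ψ : AddChar (ZMod T × ZMod L) ℂ := ZMod.stdAddChar.coprod ZMod.stdAddChar
  set f : ZMod T × ZMod L → ℂ := fun p ↦ h p
  set g : ZMod T × ZMod L → ℂ := fun p ↦ f p - 1 / 2 * f (p - (1, 1)) - 1 / 2 * f (p - (1, -1))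
  have hg (w) : ψ.dft g w = (1 - 1 / 2 * ψ (w * (1, 1)) - 1 / 2 * ψ (w * (1, -1))) * ψ.dft f w := by
    simp only [g, AddChar.dft_sub, AddChar.dft_const_mul, AddChar.dft_comp_sub_right]
    ring
  calc _ = ∑ p, ‖g p‖ ^ 2 := by
        rw [← sum_range_sum_range_natCast]
        refine sum_congr rfl fun t _ ↦ sum_congr rfl fun j _ ↦ ?_
        have : g (t, j) =
            ((h (t, j) - 1 / 2 * h (t - 1, j - 1) - 1 / 2 * h (t - 1, j + 1) : ℝ) : ℂ) := by
          simp [g, f, sub_neg_eq_add]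
        rw [this, norm_real, Real.norm_eq_abs, sq_abs]
    _ = ((L : ℝ) * T)⁻¹ * ∑ w, ‖ψ.dft g w‖ ^ 2 := by
        rw [AddChar.sum_norm_dft_sq ((ZMod.isPrimitive_stdAddChar T).coprod
          (ZMod.isPrimitive_stdAddChar L)), Fintype.card_prod, ZMod.card, ZMod.card]
        push_cast
        field_simp
    _ = _ := by
        rw [mul_sum, ← sum_range_sum_range_natCast]
        refine sum_congr rfl fun ν _ ↦ sum_congr rfl fun k _ ↦ ?_
        rw [sum_range_exp_mul_eq_dft f, hg, norm_mul, norm_mul, mul_pow, mul_pow,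
          norm_one_sub_half_coprod_stdAddChar_sq, norm_one_div_ofReal_sqrt_sq (by positivity)]
        ring
end
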